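/- arXiv:2401.05298 — 7 statements merged into one kernel-verified Lean document; each statement's English description precedes it below -/
import Mathlib

section
/- Let RG⁺ denote the set consisting of Δ together with all one-point diagrams (mR, nR) with m a positive odd integer, n a positive even integer with n ≥ 4 and n ≥ m+3. Then for every z ∈ D_1 there exists p ∈ RG⁺ such that d_B(z, p) ≤ 11R/8, i.e., max(3R/2 − d_B(p,z), 0) ≥ R/8. -/
open scoped BigOperators

/-- The space of persistence diagrams on one point: `T ∪ {Δ}`, where
`T = {(x₁,x₂) : x₂ > x₁ ≥ 0}` and `none` plays the role of the diagonal `Δ`. -/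
abbrev D1 : Type := Option {p : ℝ × ℝ // 0 ≤ p.1 ∧ p.1 < p.2}

/-- The bottleneck distance on `D1`. -/
noncomputable def dB : D1 → D1 → ℝ
  | none, none => 0
  | none, some p => (p.1.2 - p.1.1) / 2
  | some p, none => (p.1.2 - p.1.1) / 2
  | some p, some q =>
      min (max |p.1.1 - q.1.1| |p.1.2 - q.1.2|)
        (max ((p.1.2 - p.1.1) / 2) ((q.1.2 - q.1.1) / 2))

/-- max over coordinates. -/
noncomputable def dBmax {N : ℕ} (x y : Fin N → D1) : ℝ :=
  Finset.univ.fold max 0 (fun i => dB (x i) (y i))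

/-- bottleneck distance on tuples, min over permutations. -/
noncomputable def dBn {N : ℕ} (x y : Fin N → D1) : ℝ :=
  Finset.univ.inf' Finset.univ_nonempty
    (fun ψ : Equiv.Perm (Fin N) => dBmax x (y ∘ ψ))

def RGplus (R : ℝ) : Set D1 :=
  insert none {d : D1 | ∃ p, d = some p ∧ ∃ m k : ℕ,
    Odd m ∧ 1 ≤ m ∧ Even k ∧ 4 ≤ k ∧ m + 3 ≤ k ∧ p.1 = ((m : ℝ) * R, (k : ℝ) * R)}

def inBox (L : ℝ) : D1 → Prop
  | none => True
  | some p => p.1.1 ∈ Set.Icc 0 L ∧ p.1.2 ∈ Set.Icc 0 L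

/-- Every `z ∈ D1` is within `11R/8` of some element of `RG⁺`. -/
theorem exists_RGplus_close (R : ℝ) (hR : 0 < R) (z : D1) :
    ∃ p ∈ RGplus R, dB z p ≤ 11 * R / 8 ∧ R / 8 ≤ max (3 * R / 2 - dB p z) 0 := by
  match z with
  | none =>
      refine ⟨none, Or.inl rfl, ?_, ?_⟩
      · show (0:ℝ) ≤ 11 * R / 8; positivity
      · show R / 8 ≤ max (3 * R / 2 - 0) 0
        refine le_trans ?_ (le_max_left _ _); linarith
  | some ⟨⟨x1, x2⟩, hx1, hx12⟩ =>
      by_cases h : x2 - x1 ≤ 11 * R / 4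
      · refine ⟨none, Or.inl rfl, ?_, ?_⟩
        · show (x2 - x1) / 2 ≤ 11 * R / 8; linarith
        · show R / 8 ≤ max (3 * R / 2 - (x2 - x1) / 2) 0
          refine le_trans ?_ (le_max_left _ _); linarith
      · push_neg at h
        set a : ℕ := ⌊x1 / (2 * R)⌋₊ with ha
        set m : ℕ := 2 * a + 1 with hm
        set c : ℕ := ⌈(x2 / R - 1) / 2⌉₊ with hc
        set k : ℕ := max (2 * c) (max (m + 3) 4) with hk
        have h2R : (0:ℝ) < 2 * R := by linarith
        have hma : ((a:ℝ)) ≤ x1 / (2 * R) := Nat.floor_le (by positivity)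
        have hma' : x1 / (2 * R) < (a:ℝ) + 1 := Nat.lt_floor_add_one _
        have hm1 : (m:ℝ) * R ≤ x1 + R := by
          have : (a:ℝ) * (2 * R) ≤ x1 := by
            rw [← le_div_iff₀ h2R]; exact hma
          push_cast [hm]; nlinarith
        have hm2 : x1 ≤ (m:ℝ) * R + R := by
          have : x1 < ((a:ℝ) + 1) * (2 * R) := by
            rw [← div_lt_iff₀ h2R]; exact hma'
          push_cast [hm]; nlinarith
        have hcnn : (0:ℝ) ≤ (x2 / R - 1) / 2 := by
          have : R ≤ x2 := by nlinarith
          have : 1 ≤ x2 / R := (le_div_iff₀ hR).mpr (by linarith)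
          linarith
        have hc1 : (x2 / R - 1) / 2 ≤ (c:ℝ) := Nat.le_ceil _
        have hc2 : (c:ℝ) < (x2 / R - 1) / 2 + 1 := Nat.ceil_lt_add_one hcnn
        have hk2c : 2 * c ≤ k := le_max_left _ _
        have hkm3 : m + 3 ≤ k := le_trans (le_max_left _ _) (le_max_right _ _)
        have hk4 : 4 ≤ k := le_trans (le_max_right _ _) (le_max_right _ _)
        have hx2R : x2 = (x2 / R) * R := by field_simp
        have hk_lb : x2 - R ≤ (k:ℝ) * R := by
          have h1 : x2 / R - 1 ≤ (2 * c : ℕ) := by push_cast; linarith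
          have h2 : ((2 * c : ℕ) : ℝ) ≤ (k:ℝ) := by exact_mod_cast hk2c
          have : x2 / R - 1 ≤ (k:ℝ) := le_trans h1 h2
          nlinarith
        have hk_ub : (k:ℝ) * R ≤ x2 + 11 * R / 8 := by
          rcases max_choice (2 * c) (max (m + 3) 4) with hh | hh
          · rw [hk, hh]
            have : ((2 * c : ℕ) : ℝ) < x2 / R + 1 := by push_cast; linarith
            nlinarith
          · rcases max_choice (m + 3) 4 with hh2 | hh2
            · rw [hk, hh, hh2]
              have : ((m + 3 : ℕ) : ℝ) * R = (m:ℝ) * R + 3 * R := by push_cast; ring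
              rw [this]; linarith
            · rw [hk, hh, hh2]; push_cast; linarith
        have hmkR : (m:ℝ) * R < (k:ℝ) * R := by
          have : (m:ℝ) < (k:ℝ) := by exact_mod_cast (by omega : m < k)
          nlinarith
        refine ⟨some ⟨((m:ℝ) * R, (k:ℝ) * R), ⟨by positivity, hmkR⟩⟩, ?_, ?_, ?_⟩
        · refine Or.inr ⟨_, rfl, m, k, ⟨a, by omega⟩, by omega, ?_, hk4, hkm3, rfl⟩
          rcases max_choice (2 * c) (max (m + 3) 4) with hh | hh
          · rw [hk, hh]; exact ⟨c, by ring⟩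
          · rcases max_choice (m + 3) 4 with hh2 | hh2
            · rw [hk, hh, hh2]; exact ⟨a + 2, by omega⟩
            · rw [hk, hh, hh2]; exact ⟨2, by omega⟩
        · show min (max |x1 - (m:ℝ) * R| |x2 - (k:ℝ) * R|) _ ≤ 11 * R / 8
          refine le_trans (min_le_left _ _) (max_le ?_ ?_)
          · rw [abs_le]; constructor <;> linarith
          · rw [abs_le]; constructor <;> linarith
        · have hle : min (max |(m:ℝ) * R - x1| |(k:ℝ) * R - x2|)
              (max (((k:ℝ) * R - (m:ℝ) * R) / 2) ((x2 - x1) / 2)) ≤ 11 * R / 8 := by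
            refine le_trans (min_le_left _ _) (max_le ?_ ?_)
            · rw [abs_le]; constructor <;> linarith
            · rw [abs_le]; constructor <;> linarith
          refine le_trans ?_ (le_max_left _ _)
          show R / 8 ≤ 3 * R / 2 - min (max |(m:ℝ) * R - x1| |(k:ℝ) * R - x2|)
              (max (((k:ℝ) * R - (m:ℝ) * R) / 2) ((x2 - x1) / 2))
          linarith
end

section
/- The cover RU = {B(p, 3R/2) : p ∈ RG⁺} of D_1 by open balls of radius 3R/2 has multiplicity at most 4; that is, every point of D_1 lies in at most 4 of these balls. -/
/-!
A point `(mR, kR)` of `RG⁺` has half-persistence `(k - m)R/2 ≥ 3R/2`, so it lies in the ball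
around `q` only if both of its coordinates are within `3R/2` of those of `q`. An open interval of
length `3R` contains at most two odd and at most two even multiples of `R`, so at most four grid
points `{a, a + 2} × {b, b + 2}` qualify. The diagonal lies in the ball only if `q₂ - q₁ < 3R`,
and then the corners `(a, b + 2)` and `(a + 2, b)` cannot both qualify. Grid points are told apart
by their indices `(m, k)`.
-/

open scoped BigOperators

lemma some_mem_RGplus_iff {R : ℝ} {p : {p : ℝ × ℝ // 0 ≤ p.1 ∧ p.1 < p.2}} :
    (some p : D1) ∈ RGplus R ↔ ∃ m k : ℕ, Odd m ∧ 1 ≤ m ∧ Even k ∧ 4 ≤ k ∧ m + 3 ≤ k ∧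
      p.1 = ((m : ℝ) * R, (k : ℝ) * R) := by
  constructor
  · rintro (h | ⟨p', hp', h⟩)
    · exact absurd h (Option.some_ne_none p)
    · rwa [Option.some.inj hp']
  · exact fun h => Or.inr ⟨p, rfl, h⟩

lemma three_mul_div_two_le_dB_none {R : ℝ} (hR : 0 ≤ R) {p : {p : ℝ × ℝ // 0 ≤ p.1 ∧ p.1 < p.2}}
    (hp : (some p : D1) ∈ RGplus R) : 3 * R / 2 ≤ dB (some p) none := by
  obtain ⟨m, k, -, -, -, -, hmk, hpe⟩ := some_mem_RGplus_iff.mp hp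
  have hmk' : (m : ℝ) + 3 ≤ k := by exact_mod_cast hmk
  show 3 * R / 2 ≤ (p.1.2 - p.1.1) / 2
  rw [hpe]
  nlinarith

lemma eq_none_of_dB_none_lt {R : ℝ} (hR : 0 ≤ R) {p : D1} (hp : p ∈ RGplus R)
    (hd : dB p none < 3 * R / 2) : p = none := by
  cases p with
  | none => rfl
  | some p => exact absurd hd (three_mul_div_two_le_dB_none hR hp).not_gt

lemma abs_sub_lt_of_dB_lt_of_le_dB_none {r : ℝ} {p q : {p : ℝ × ℝ // 0 ≤ p.1 ∧ p.1 < p.2}}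
    (hp : r ≤ dB (some p) none) (hd : dB (some p) (some q) < r) :
    |p.1.1 - q.1.1| < r ∧ |p.1.2 - q.1.2| < r := by
  have hpers : r ≤ max ((p.1.2 - p.1.1) / 2) ((q.1.2 - q.1.1) / 2) := le_max_of_le_left hp
  have hcoord : max |p.1.1 - q.1.1| |p.1.2 - q.1.2| < r :=
    (min_lt_iff.mp hd).resolve_right hpers.not_gt
  exact max_lt_iff.mp hcoord

lemma exists_eq_or_eq_add_two_of_abs_sub_lt {R : ℝ} (hR : 0 < R) (c : ℝ) (r : ℕ) :
    ∃ a : ℕ, ∀ m : ℕ, m % 2 = r → |m * R - c| < 3 * R / 2 → m = a ∨ m = a + 2 := by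
  classical
  by_cases hex : ∃ m : ℕ, m % 2 = r ∧ |m * R - c| < 3 * R / 2
  · refine ⟨Nat.find hex, fun m hmr hm => ?_⟩
    obtain ⟨har, ha⟩ := Nat.find_spec hex
    have hle : Nat.find hex ≤ m := Nat.find_min' hex ⟨hmr, hm⟩
    have hlt : (m : ℝ) < Nat.find hex + 3 := by
      refine lt_of_mul_lt_mul_right ?_ hR.le
      rw [add_mul]
      linarith [(abs_lt.mp hm).2, (abs_lt.mp ha).1]
    have hlt' : m < Nat.find hex + 3 := by exact_mod_cast hlt
    omega
  · push Not at hex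
    exact ⟨0, fun m hmr hm => absurd hm (hex m hmr).not_gt⟩

/-- The diagonal goes to `(0, 0)`, which is not the index of any point of `RG⁺` since there `m`
is odd. -/
noncomputable def gridIndex (R : ℝ) : D1 → ℕ × ℕ
  | none => (0, 0)
  | some p => (⌊p.1.1 / R⌋₊, ⌊p.1.2 / R⌋₊)

lemma gridIndex_some_of_eq {R : ℝ} (hR : R ≠ 0) {p : {p : ℝ × ℝ // 0 ≤ p.1 ∧ p.1 < p.2}}
    {m k : ℕ} (hpe : p.1 = ((m : ℝ) * R, (k : ℝ) * R)) : gridIndex R (some p) = (m, k) := by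
  simp [gridIndex, hpe, hR]

lemma injOn_gridIndex_RGplus {R : ℝ} (hR : R ≠ 0) : Set.InjOn (gridIndex R) (RGplus R) := by
  have hgrid : ∀ {p}, (some p : D1) ∈ RGplus R → ∃ m k : ℕ, Odd m ∧
      p.1 = ((m : ℝ) * R, (k : ℝ) * R) ∧ gridIndex R (some p) = (m, k) := fun hp => by
    obtain ⟨m, k, hm, -, -, -, -, hpe⟩ := some_mem_RGplus_iff.mp hp
    exact ⟨m, k, hm, hpe, gridIndex_some_of_eq hR hpe⟩
  rintro (_ | p) hp (_ | p') hp' he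
  · rfl
  · obtain ⟨m, k, hm, -, he'⟩ := hgrid hp'
    rw [he'] at he
    exact absurd ((Prod.mk.inj he).1 ▸ hm) Nat.not_odd_zero
  · obtain ⟨m, k, hm, -, he'⟩ := hgrid hp
    rw [he'] at he
    exact absurd ((Prod.mk.inj he).1 ▸ hm) Nat.not_odd_zero
  · obtain ⟨m, k, -, hpe, he₁⟩ := hgrid hp
    obtain ⟨m', k', -, hpe', he₂⟩ := hgrid hp'
    obtain ⟨rfl, rfl⟩ := Prod.mk.inj (he₁.symm.trans (he.trans he₂))
    exact congrArg some (Subtype.ext (hpe.trans hpe'.symm))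

def gridWindow (R : ℝ) (q : ℝ × ℝ) : Set (ℕ × ℕ) :=
  {x | Odd x.1 ∧ Even x.2 ∧ x.1 + 3 ≤ x.2 ∧
    |x.1 * R - q.1| < 3 * R / 2 ∧ |x.2 * R - q.2| < 3 * R / 2}

lemma gridIndex_mem_gridWindow {R : ℝ} (hR : 0 < R) {p q : {p : ℝ × ℝ // 0 ≤ p.1 ∧ p.1 < p.2}}
    (hp : (some p : D1) ∈ RGplus R) (hd : dB (some p) (some q) < 3 * R / 2) :
    gridIndex R (some p) ∈ gridWindow R q.1 := by
  obtain ⟨m, k, hm, -, hk, -, hmk, hpe⟩ := some_mem_RGplus_iff.mp hp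
  obtain ⟨h₁, h₂⟩ := abs_sub_lt_of_dB_lt_of_le_dB_none (three_mul_div_two_le_dB_none hR.le hp) hd
  rw [hpe] at h₁ h₂
  rw [gridIndex_some_of_eq hR.ne' hpe]
  exact ⟨hm, hk, hmk, h₁, h₂⟩

lemma exists_gridWindow_subset_product {R : ℝ} (hR : 0 < R) (q : ℝ × ℝ) :
    ∃ a b : ℕ, gridWindow R q ⊆ (({a, a + 2} ×ˢ {b, b + 2} : Finset (ℕ × ℕ)) : Set (ℕ × ℕ)) := by
  obtain ⟨a, ha⟩ := exists_eq_or_eq_add_two_of_abs_sub_lt hR q.1 1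
  obtain ⟨b, hb⟩ := exists_eq_or_eq_add_two_of_abs_sub_lt hR q.2 0
  refine ⟨a, b, fun x ⟨hm, hk, _, h₁, h₂⟩ => ?_⟩
  simpa [Finset.mem_product] using
    And.intro (ha x.1 (Nat.odd_iff.mp hm) h₁) (hb x.2 (Nat.even_iff.mp hk) h₂)

/-- `(a + 2, b)` forces `b ≥ a + 5`, and then `(a, b + 2)` forces `q₂ - q₁ > 4R`. -/
lemma notMem_gridWindow_or_notMem_gridWindow {R : ℝ} (hR : 0 < R) {q : ℝ × ℝ}
    (hq : q.2 - q.1 < 3 * R) (a b : ℕ) :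
    (a, b + 2) ∉ gridWindow R q ∨ (a + 2, b) ∉ gridWindow R q := by
  by_contra! ⟨⟨-, -, -, ha, hb⟩, ⟨-, -, hab, -, -⟩⟩
  have hab' : (a : ℝ) + 5 ≤ b := by exact_mod_cast hab
  rw [abs_lt] at ha hb
  push_cast at hb
  nlinarith

lemma exists_finset_mapsTo_gridIndex {R : ℝ} (hR : 0 < R) (z : D1) :
    ∃ T : Finset (ℕ × ℕ), T.card ≤ 4 ∧
      Set.MapsTo (gridIndex R) {p | p ∈ RGplus R ∧ dB p z < 3 * R / 2} T := by
  rcases z with _ | q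
  · refine ⟨{(0, 0)}, by simp, fun p ⟨hp, hd⟩ => ?_⟩
    simp [eq_none_of_dB_none_lt hR.le hp hd, gridIndex]
  obtain ⟨a, b, hwin⟩ := exists_gridWindow_subset_product hR q.1
  set P : Finset (ℕ × ℕ) := {a, a + 2} ×ˢ {b, b + 2}
  have hP : P.card ≤ 4 := by
    rw [Finset.card_product]
    exact Nat.mul_le_mul Finset.card_le_two Finset.card_le_two
  by_cases hΔ : dB none (some q) < 3 * R / 2
  · have hq : q.1.2 - q.1.1 < 3 * R := by
      change (q.1.2 - q.1.1) / 2 < 3 * R / 2 at hΔ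
      linarith
    obtain ⟨c, hcP, hc⟩ : ∃ c ∈ P, c ∉ gridWindow R q.1 := by
      rcases notMem_gridWindow_or_notMem_gridWindow hR hq a b with h | h
      · exact ⟨_, by simp [P], h⟩
      · exact ⟨_, by simp [P], h⟩
    refine ⟨insert (0, 0) (P.erase c), ?_, ?_⟩
    · have := Finset.card_erase_add_one hcP
      have := Finset.card_insert_le (0, 0) (P.erase c)
      omega
    · rintro (_ | p) ⟨hp, hd⟩
      · simp [gridIndex]
      · have hx := gridIndex_mem_gridWindow hR hp hd
        exact Finset.mem_insert_of_mem
          (Finset.mem_erase.mpr ⟨fun h => hc (h ▸ hx), Finset.mem_coe.mp (hwin hx)⟩)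
  · refine ⟨P, hP, ?_⟩
    rintro (_ | p) ⟨hp, hd⟩
    · exact absurd hd hΔ
    · exact hwin (gridIndex_mem_gridWindow hR hp hd)

/-- The cover of `D1` by open `3R/2`-balls centered at `RG⁺` has multiplicity at most `4`. -/
theorem RGplus_cover_multiplicity_le_four (R : ℝ) (hR : 0 < R) (z : D1) :
    {p | p ∈ RGplus R ∧ dB p z < 3 * R / 2}.Finite ∧
    {p | p ∈ RGplus R ∧ dB p z < 3 * R / 2}.ncard ≤ 4 := by
  obtain ⟨T, hT, hmaps⟩ := exists_finset_mapsTo_gridIndex hR z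
  have hinj : Set.InjOn (gridIndex R) {p | p ∈ RGplus R ∧ dB p z < 3 * R / 2} :=
    (injOn_gridIndex_RGplus hR.ne').mono fun _ hp => hp.1
  refine ⟨Set.Finite.of_injOn hmaps hinj T.finite_toSet, ?_⟩
  calc _ ≤ (T : Set (ℕ × ℕ)).ncard := Set.ncard_le_ncard_of_injOn _ hmaps hinj T.finite_toSet
    _ ≤ 4 := by rwa [Set.ncard_coe_finset]
end

section
/- The cover RV = {B(p, 3R/2) : p ∈ RG^{n+}} of D_n has multiplicity at most 4^n: each diagram in D_n lies in at most 4^n of these open balls. -/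
open scoped BigOperators

noncomputable def tau : D1 → Option (ℝ × ℝ) := Option.map (fun p => p.1)

lemma tau_inj : Function.Injective tau :=
  Option.map_injective (fun a b h => Subtype.ext h)

noncomputable def lb (t : ℝ) (c : ℤ) : ℤ := 2 * (⌊(t - c) / 2⌋ + 1) + c

lemma lb_gt (t : ℝ) (c : ℤ) : t < lb t c := by
  have h := Int.lt_floor_add_one ((t - c) / 2)
  unfold lb; push_cast; linarith

lemma mem_interval_parity (t : ℝ) (c m j : ℤ) (hm : m = 2 * j + c)
    (h1 : t < m) (h2 : (m : ℝ) < t + 3) : m = lb t c ∨ m = lb t c + 2 := by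
  have hge : lb t c ≤ m := by
    have h3 : (t - c) / 2 < (j : ℝ) := by
      rw [hm] at h1; push_cast at h1; linarith
    have hfl : ⌊(t - c) / 2⌋ < j := Int.floor_lt.mpr h3
    unfold lb; omega
  have hlt : (m : ℝ) < (lb t c : ℝ) + 3 := by
    have := lb_gt t c; linarith
  have hlt' : m < lb t c + 3 := by exact_mod_cast hlt
  have hpar : ∃ j', lb t c = 2 * j' + c := ⟨⌊(t-c)/2⌋ + 1, rfl⟩
  obtain ⟨j', hj'⟩ := hpar
  omega

lemma card_four {α : Type*} [DecidableEq α] (a b c d : α) :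
    (insert a (insert b (insert c ({d} : Finset α)))).card ≤ 4 := by
  apply le_trans (Finset.card_insert_le _ _)
  have h2 : (insert b (insert c ({d} : Finset α))).card ≤ 3 := by
    apply le_trans (Finset.card_insert_le _ _)
    have h3 : (insert c ({d} : Finset α)).card ≤ 2 := by
      apply le_trans (Finset.card_insert_le _ _)
      simp
    omega
  omega

lemma gt_bound {R a : ℝ} (hR : 0 < R) {b : ℝ} : a / R - 3 / 2 < b ↔ a - 3 * R / 2 < b * R := by
  rw [sub_lt_iff_lt_add, div_lt_iff₀ hR, sub_lt_iff_lt_add]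
  constructor <;> intro h <;> nlinarith

lemma lt_bound {R a : ℝ} (hR : 0 < R) {b : ℝ} : b < a / R - 3 / 2 + 3 ↔ b * R < a + 3 * R / 2 := by
  rw [show a / R - 3 / 2 + 3 = a / R + 3 / 2 by ring, ← sub_lt_iff_lt_add, lt_div_iff₀ hR]
  constructor <;> intro h <;> nlinarith

lemma key (R : ℝ) (hR : 0 < R) (z0 : D1) :
    ∃ T : Finset (Option (ℝ × ℝ)), T.card ≤ 4 ∧
      ∀ d ∈ RGplus R, dB z0 d < 3 * R / 2 → tau d ∈ T := by
  classical
  -- a helper to analyze membership in RGplus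
  match z0 with
  | none =>
      refine ⟨{none}, by simp, ?_⟩
      intro d hd hlt
      rcases hd with rfl | ⟨p, rfl, m', k', hmo, hm1, hke, hk4, hmk, hp⟩
      · simp [tau]
      · exfalso
        have : dB none (some p) = (p.1.2 - p.1.1) / 2 := rfl
        rw [this, hp] at hlt
        simp only at hlt
        have : (3 : ℝ) * R ≤ (k' : ℝ) * R - (m' : ℝ) * R := by
          have : ((m' : ℝ) + 3) * R ≤ (k' : ℝ) * R := by
            apply mul_le_mul_of_nonneg_right _ hR.le
            exact_mod_cast hmk
          nlinarith
        linarith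
  | some q =>
      set x := q.1.1 with hx
      set y := q.1.2 with hy
      set t := x / R - 3 / 2 with ht
      set s := y / R - 3 / 2 with hs
      set M := lb t 1 with hM
      set K := lb s 0 with hK
      -- common analysis for grid points
      have main : ∀ (p : {p : ℝ × ℝ // 0 ≤ p.1 ∧ p.1 < p.2}) (m' k' : ℕ),
          Odd m' → Even k' → m' + 3 ≤ k' →
          p.1 = ((m' : ℝ) * R, (k' : ℝ) * R) →
          dB (some q) (some p) < 3 * R / 2 →
          (((m' : ℤ) = M ∨ (m' : ℤ) = M + 2) ∧ ((k' : ℤ) = K ∨ (k' : ℤ) = K + 2)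
            ∧ |x - (m' : ℝ) * R| < 3 * R / 2 ∧ |y - (k' : ℝ) * R| < 3 * R / 2) := by
        intro p m' k' hmo hke hmk hp hlt
        have hdb : dB (some q) (some p) =
            min (max |x - p.1.1| |y - p.1.2|)
              (max ((y - x) / 2) ((p.1.2 - p.1.1) / 2)) := rfl
        rw [hdb, hp] at hlt
        simp only at hlt
        have hsec : (3 : ℝ) * R / 2 ≤ max ((y - x) / 2) (((k' : ℝ) * R - (m' : ℝ) * R) / 2) := by
          have h1 : ((m' : ℝ) + 3) * R ≤ (k' : ℝ) * R := by
            apply mul_le_mul_of_nonneg_right _ hR.le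
            exact_mod_cast hmk
          have : (3:ℝ) * R / 2 ≤ ((k' : ℝ) * R - (m' : ℝ) * R) / 2 := by nlinarith
          exact le_trans this (le_max_right _ _)
        have hfirst : max |x - (m' : ℝ) * R| |y - (k' : ℝ) * R| < 3 * R / 2 := by
          rcases min_lt_iff.mp hlt with h | h
          · exact h
          · linarith
        have hm_abs := lt_of_le_of_lt (le_max_left _ _) hfirst
        have hk_abs := lt_of_le_of_lt (le_max_right _ _) hfirst
        have hmb := abs_lt.mp hm_abs
        have hkb := abs_lt.mp hk_abs
        have hRne : R ≠ 0 := ne_of_gt hR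
        have htm : t < ((m' : ℤ) : ℝ) := by
          push_cast
          rw [ht, gt_bound hR]
          linarith [hmb.2]
        have htm' : (((m' : ℤ) : ℝ)) < t + 3 := by
          push_cast
          rw [ht, lt_bound hR]
          linarith [hmb.1]
        have hts : s < ((k' : ℤ) : ℝ) := by
          push_cast
          rw [hs, gt_bound hR]
          linarith [hkb.2]
        have hts' : (((k' : ℤ) : ℝ)) < s + 3 := by
          push_cast
          rw [hs, lt_bound hR]
          linarith [hkb.1]
        obtain ⟨jm, hjm⟩ := hmo
        obtain ⟨jk, hjk⟩ := hke
        have hmm : (m' : ℤ) = M ∨ (m' : ℤ) = M + 2 := by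
          apply mem_interval_parity t 1 (m' : ℤ) (jm : ℤ) (by exact_mod_cast hjm) htm htm'
        have hkk : (k' : ℤ) = K ∨ (k' : ℤ) = K + 2 := by
          apply mem_interval_parity s 0 (k' : ℤ) (jk : ℤ) (by push_cast [hjk]; ring) hts hts'
        exact ⟨hmm, hkk, hm_abs, hk_abs⟩
      by_cases hbox : y - x < 3 * R
      · -- the diagonal ball contains q; at most 3 grid points
        refine ⟨insert none (insert (some ((M : ℝ) * R, (K : ℝ) * R))
            (insert (some (((M : ℝ) + 2) * R, ((K : ℝ) + 2) * R))
            ({if K - M ≤ 3 then some ((M : ℝ) * R, ((K : ℝ) + 2) * R)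
              else some (((M : ℝ) + 2) * R, (K : ℝ) * R)} : Finset (Option (ℝ × ℝ))))),
          card_four _ _ _ _, ?_⟩
        intro d hd hlt
        rcases hd with rfl | ⟨p, rfl, m', k', hmo, hm1, hke, hk4, hmk, hp⟩
        · simp [tau]
        · obtain ⟨hmm, hkk, habsm, habsk⟩ := main p m' k' hmo hke hmk hp hlt
          have hmb := abs_lt.mp habsm
          have hkb := abs_lt.mp habsk
          have hdiff : ((k' : ℤ) : ℝ) - ((m' : ℤ) : ℝ) < 6 := by
            push_cast
            have h1 : x - 3 * R / 2 < (m' : ℝ) * R := by linarith [hmb.2]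
            have h2 : (k' : ℝ) * R < y + 3 * R / 2 := by linarith [hkb.1]
            have h3 : ((k' : ℝ) - (m' : ℝ)) * R < 6 * R := by nlinarith
            exact lt_of_mul_lt_mul_right (by nlinarith) hR.le
          have hdiff' : (k' : ℤ) - (m' : ℤ) < 6 := by exact_mod_cast hdiff
          have hge3 : (m' : ℤ) + 3 ≤ (k' : ℤ) := by exact_mod_cast hmk
          have htau : tau (some p) = some (((m' : ℤ) : ℝ) * R, ((k' : ℤ) : ℝ) * R) := by
            simp [tau, hp]
          rw [htau]
          rcases hmm with h1 | h1 <;> rcases hkk with h2 | h2 <;> rw [h1, h2] <;> push_cast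
          · simp
          · have hKM : K - M ≤ 3 := by omega
            rw [if_pos hKM]
            simp
          · have hKM : ¬ K - M ≤ 3 := by omega
            rw [if_neg hKM]
            simp
          · simp
      · -- no diagonal; at most 4 grid points
        refine ⟨insert (some ((M : ℝ) * R, (K : ℝ) * R))
            (insert (some ((M : ℝ) * R, ((K : ℝ) + 2) * R))
            (insert (some (((M : ℝ) + 2) * R, (K : ℝ) * R))
            ({some (((M : ℝ) + 2) * R, ((K : ℝ) + 2) * R)} : Finset (Option (ℝ × ℝ))))),
          card_four _ _ _ _, ?_⟩
        intro d hd hlt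
        rcases hd with rfl | ⟨p, rfl, m', k', hmo, hm1, hke, hk4, hmk, hp⟩
        · exfalso
          have : dB (some q) none = (y - x) / 2 := rfl
          rw [this] at hlt
          linarith
        · obtain ⟨hmm, hkk, _, _⟩ := main p m' k' hmo hke hmk hp hlt
          have htau : tau (some p) = some (((m' : ℤ) : ℝ) * R, ((k' : ℤ) : ℝ) * R) := by
            simp [tau, hp]
          rw [htau]
          rcases hmm with h1 | h1 <;> rcases hkk with h2 | h2 <;> rw [h1, h2] <;> push_cast <;> simp

/-- The cover of `D_n` by the open `3R/2`-balls centered at diagrams with all points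
in `RG⁺` has multiplicity at most `4ⁿ` (centers counted as diagrams, i.e. multisets). -/
theorem RGplus_cover_multiplicity_le_pow {N : ℕ} (R : ℝ) (hR : 0 < R)
    (z : Fin N → D1) :
    {m : Multiset D1 | ∃ g : Fin N → D1, (↑(List.ofFn g) : Multiset D1) = m ∧
      (∀ i, g i ∈ RGplus R) ∧ dBn z g < 3 * R / 2}.Finite ∧
    {m : Multiset D1 | ∃ g : Fin N → D1, (↑(List.ofFn g) : Multiset D1) = m ∧
      (∀ i, g i ∈ RGplus R) ∧ dBn z g < 3 * R / 2}.ncard ≤ 4 ^ N := by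
  classical
  set S := {m : Multiset D1 | ∃ g : Fin N → D1, (↑(List.ofFn g) : Multiset D1) = m ∧
      (∀ i, g i ∈ RGplus R) ∧ dBn z g < 3 * R / 2} with hS
  choose T hT4 hTmem using fun i => key R hR (z i)
  set A : Fin N → Set D1 := fun i => tau ⁻¹' ↑(T i) with hA
  have hAfin : ∀ i, (A i).Finite := fun i =>
    Set.Finite.preimage tau_inj.injOn (T i).finite_toSet
  set F : Finset (Fin N → D1) := Fintype.piFinset (fun i => (hAfin i).toFinset) with hF
  have hsub : S ⊆ (fun h : Fin N → D1 => (↑(List.ofFn h) : Multiset D1)) '' ↑F := by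
    rintro m ⟨g, rfl, hg, hd⟩
    unfold dBn at hd
    obtain ⟨ψ, -, hψ⟩ := (Finset.inf'_lt_iff Finset.univ_nonempty).mp hd
    refine ⟨g ∘ ψ, ?_, ?_⟩
    · rw [Finset.mem_coe, Fintype.mem_piFinset]
      intro i
      rw [Set.Finite.mem_toFinset]
      have hle : dB (z i) ((g ∘ ψ) i) ≤ dBmax z (g ∘ ψ) :=
        (Finset.le_fold_max _).mpr (Or.inr ⟨i, Finset.mem_univ i, le_rfl⟩)
      exact hTmem i _ (hg (ψ i)) (lt_of_le_of_lt hle hψ)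
    · simp only [List.ofFn_eq_map]
      show Multiset.map (g ∘ ψ) ↑(List.finRange N) = Multiset.map g ↑(List.finRange N)
      have h1 : (↑(List.finRange N) : Multiset (Fin N)) = (Finset.univ : Finset (Fin N)).val := rfl
      rw [h1, ← Multiset.map_map]
      congr 1
      calc Multiset.map (⇑ψ) Finset.univ.val = (Finset.univ.map ψ.toEmbedding).val := by
            rw [Finset.map_val]; rfl
        _ = Finset.univ.val := by rw [Finset.map_univ_equiv]
  have hIm : ((fun h : Fin N → D1 => (↑(List.ofFn h) : Multiset D1)) '' ↑F).Finite :=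
    F.finite_toSet.image _
  have hfin : S.Finite := hIm.subset hsub
  refine ⟨hfin, ?_⟩
  have hcardA : ∀ i, (hAfin i).toFinset.card ≤ 4 := by
    intro i
    have h1 : (hAfin i).toFinset.card = (A i).ncard := (Set.ncard_eq_toFinset_card _ (hAfin i)).symm
    have h2 : (A i).ncard = (tau '' A i).ncard := (Set.ncard_image_of_injective _ tau_inj).symm
    have h3 : tau '' A i ⊆ ↑(T i) := Set.image_preimage_subset _ _
    have h4 : (tau '' A i).ncard ≤ (↑(T i) : Set (Option (ℝ × ℝ))).ncard :=
      Set.ncard_le_ncard h3 (T i).finite_toSet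
    rw [Set.ncard_coe_finset] at h4
    have h5 := hT4 i
    omega
  calc S.ncard ≤ ((fun h : Fin N → D1 => (↑(List.ofFn h) : Multiset D1)) '' ↑F).ncard :=
        Set.ncard_le_ncard hsub hIm
    _ ≤ (↑F : Set (Fin N → D1)).ncard := Set.ncard_image_le F.finite_toSet
    _ = F.card := Set.ncard_coe_finset _
    _ = ∏ i, (hAfin i).toFinset.card := Fintype.card_piFinset _
    _ ≤ ∏ _i : Fin N, 4 := Finset.prod_le_prod' (fun i _ => hcardA i)
    _ = 4 ^ N := by simp
end

section
/- Let (X,d) be a geodesic metric space and let {U_j}_{j∈J} be a cover of X by open sets of multiplicity at most M, with associated 1-Lipschitz functions φ_j : X → [0,C] where φ_j vanishes outside U_j. Then the map φ = (φ_j)_{j∈J} : X → ℓ²(J) is √M-Lipschitz. -/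
open scoped BigOperators

/-!
Near a point `z`, openness and finite multiplicity put every nearby `w` in all the `U j` that
contain `z`; hence at most `M` coordinates of `φ w - φ z` are nonzero, each bounded by `d(w, z)`,
and `φ` is locally `√M`-Lipschitz. A map that is locally `K`-Lipschitz at every point is
`K`-Lipschitz along any geodesic segment, by continuous induction on its parameter.
-/

open Set Filter Topology

section LocalToGlobal

variable {X Y : Type*} [PseudoMetricSpace X] [PseudoMetricSpace Y]

theorem continuousWithinAt_of_eventually_dist_le_mul {f : X → Y} {s : Set X} {x : X} {K : ℝ}
    (h : ∀ᶠ y in 𝓝[s] x, dist (f y) (f x) ≤ K * dist y x) : ContinuousWithinAt f s x := by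
  refine tendsto_iff_dist_tendsto_zero.2 (squeeze_zero' (.of_forall fun _ ↦ dist_nonneg) h ?_)
  have : Tendsto (fun y ↦ K * dist y x) (𝓝[s] x) (𝓝 (K * dist x x)) :=
    (((continuous_id.dist continuous_const).const_mul K).tendsto x).mono_left nhdsWithin_le_nhds
  simpa using this

theorem dist_le_mul_of_eventually_dist_le_mul_on_Icc {g : ℝ → Y} {K a b : ℝ} (hab : a ≤ b)
    (hloc : ∀ t ∈ Icc a b, ∀ᶠ s in 𝓝[Icc a b] t, dist (g s) (g t) ≤ K * dist s t) :
    dist (g b) (g a) ≤ K * (b - a) := by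
  have hg : ContinuousOn g (Icc a b) := fun t ht ↦
    continuousWithinAt_of_eventually_dist_le_mul (hloc t ht)
  have hcont : ContinuousOn (fun t ↦ (dist (g t) (g a), K * (t - a))) (Icc a b) := by
    fun_prop
  have hclosed : IsClosed ({t | dist (g t) (g a) ≤ K * (t - a)} ∩ Icc a b) := by
    rw [inter_comm]
    exact hcont.preimage_isClosed_of_isClosed isClosed_Icc OrderClosedTopology.isClosed_le'
  refine hclosed.Icc_subset_of_forall_exists_gt (by simp) ?_ ⟨hab, le_rfl⟩
  rintro t ⟨ht : dist (g t) (g a) ≤ K * (t - a), hta, htb⟩ z hz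
  have hnear : ∀ᶠ s in 𝓝[>] t, dist (g s) (g t) ≤ K * dist s t :=
    nhdsWithin_le_of_mem (Icc_mem_nhdsGT_of_mem ⟨hta, htb⟩) (hloc t ⟨hta, htb.le⟩)
  obtain ⟨s, hs, hts, hsz⟩ := (hnear.and (Ioc_mem_nhdsGT hz)).exists
  refine ⟨s, ?_, hts, hsz⟩
  rw [Real.dist_eq, abs_of_pos (sub_pos.2 hts)] at hs
  calc dist (g s) (g a) ≤ dist (g s) (g t) + dist (g t) (g a) := dist_triangle _ _ _
    _ ≤ K * (s - t) + K * (t - a) := add_le_add hs ht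
    _ = K * (s - a) := by ring

theorem dist_comp_le_mul_of_eventually_dist_le_mul {f : X → Y} {K : ℝ} (hK : 0 ≤ K)
    (hloc : ∀ z, ∀ᶠ w in 𝓝 z, dist (f w) (f z) ≤ K * dist w z)
    {γ : ℝ → X} {L : ℝ} (hL : 0 ≤ L) (hγ : LipschitzOnWith 1 γ (Icc 0 L)) :
    dist (f (γ L)) (f (γ 0)) ≤ K * L := by
  simpa using dist_le_mul_of_eventually_dist_le_mul_on_Icc (g := f ∘ γ) hL fun t ht ↦ by
    filter_upwards [(hγ.continuousOn t ht).eventually (hloc (γ t)), self_mem_nhdsWithin]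
      with s hs hsI
    calc dist (f (γ s)) (f (γ t)) ≤ K * dist (γ s) (γ t) := hs
      _ ≤ K * dist s t := by
          gcongr
          simpa using hγ.dist_le_mul s hsI t ht

end LocalToGlobal

section EllTwo

variable {J : Type*}

theorem lp.norm_sq_eq_tsum_sq (f : lp (fun _ : J ↦ ℝ) 2) : ‖f‖ ^ 2 = ∑' j, f j ^ 2 := by
  simpa using lp.norm_rpow_eq_tsum (p := 2) (by norm_num) f

theorem lp.dist_eq_sqrt_tsum (f g : lp (fun _ : J ↦ ℝ) 2) :
    dist f g = √(∑' j, (f j - g j) ^ 2) := by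
  rw [dist_eq_norm, ← Real.sqrt_sq (norm_nonneg (f - g)), lp.norm_sq_eq_tsum_sq]
  simp only [lp.coeFn_sub, Pi.sub_apply]

theorem memℓp_of_finite_support {f : J → ℝ} (hf : (Function.support f).Finite) (p) :
    Memℓp f p :=
  (memℓp_zero hf).of_exponent_ge bot_le

variable {X : Type*}

noncomputable def ellTwoMap (φ : J → X → ℝ) (hφ : ∀ x, (Function.support fun j ↦ φ j x).Finite) :
    X → lp (fun _ : J ↦ ℝ) 2 :=
  fun x ↦ ⟨fun j ↦ φ j x, memℓp_of_finite_support (hφ x) 2⟩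

theorem dist_ellTwoMap (φ : J → X → ℝ) (hφ : ∀ x, (Function.support fun j ↦ φ j x).Finite)
    (x y : X) : dist (ellTwoMap φ hφ x) (ellTwoMap φ hφ y) = √(∑' j, (φ j x - φ j y) ^ 2) :=
  lp.dist_eq_sqrt_tsum _ _

end EllTwo

section Cover

variable {X J : Type*} [PseudoMetricSpace X] {U : J → Set X} {φ : J → X → ℝ} {M : ℕ}

theorem tsum_sq_sub_le_of_forall_mem_imp_mem {w z : X} (hfin : {j | w ∈ U j}.Finite)
    (hcard : {j | w ∈ U j}.ncard ≤ M) (hlip : ∀ j, LipschitzWith 1 (φ j))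
    (hsupp : ∀ j x, x ∉ U j → φ j x = 0) (hwz : ∀ j, z ∈ U j → w ∈ U j) :
    ∑' j, (φ j w - φ j z) ^ 2 ≤ M * dist w z ^ 2 := by
  rw [tsum_eq_sum (s := hfin.toFinset) fun j hj ↦ by
    have hw : w ∉ U j := by simpa using hj
    simp [hsupp j w hw, hsupp j z (mt (hwz j) hw)]]
  have hterm : ∀ j, (φ j w - φ j z) ^ 2 ≤ dist w z ^ 2 := fun j ↦ by
    rw [← sq_abs, ← Real.dist_eq]
    gcongr
    simpa using (hlip j).dist_le_mul w z
  calc ∑ j ∈ hfin.toFinset, (φ j w - φ j z) ^ 2 ≤ ∑ _j ∈ hfin.toFinset, dist w z ^ 2 :=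
        Finset.sum_le_sum fun j _ ↦ hterm j
    _ = {j | w ∈ U j}.ncard * dist w z ^ 2 := by
        rw [Finset.sum_const, nsmul_eq_mul, Set.ncard_eq_toFinset_card _ hfin]
    _ ≤ M * dist w z ^ 2 := by gcongr

theorem eventually_dist_ellTwoMap_le (hopen : ∀ j, IsOpen (U j))
    (hmult : ∀ x, {j | x ∈ U j}.Finite ∧ {j | x ∈ U j}.ncard ≤ M)
    (hlip : ∀ j, LipschitzWith 1 (φ j)) (hsupp : ∀ j x, x ∉ U j → φ j x = 0)
    (hφ : ∀ x, (Function.support fun j ↦ φ j x).Finite) (z : X) :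
    ∀ᶠ w in 𝓝 z, dist (ellTwoMap φ hφ w) (ellTwoMap φ hφ z) ≤ √M * dist w z := by
  have hnear : ∀ᶠ w in 𝓝 z, ∀ j ∈ {j | z ∈ U j}, w ∈ U j :=
    (eventually_all_finite (hmult z).1).2 fun j hj ↦ (hopen j).mem_nhds hj
  filter_upwards [hnear] with w hw
  rw [dist_ellTwoMap]
  calc √(∑' j, (φ j w - φ j z) ^ 2) ≤ √(M * dist w z ^ 2) :=
        Real.sqrt_le_sqrt <| tsum_sq_sub_le_of_forall_mem_imp_mem (hmult w).1 (hmult w).2 hlip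
          hsupp hw
    _ = √M * dist w z := by rw [Real.sqrt_mul (Nat.cast_nonneg M), Real.sqrt_sq dist_nonneg]

end Cover

theorem cover_assembly_sqrt_lipschitz_general {X : Type*} [MetricSpace X] {J : Type*}
    (U : J → Set X) (φ : J → X → ℝ) (M : ℕ)
    (hgeo : ∀ x y : X, ∃ γ : ℝ → X, γ 0 = x ∧ γ (dist x y) = y ∧
      ∀ s ∈ Set.Icc (0 : ℝ) (dist x y), ∀ t ∈ Set.Icc (0 : ℝ) (dist x y),
        dist (γ s) (γ t) = |s - t|)
    (hopen : ∀ j, IsOpen (U j))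
    (hmult : ∀ x, {j | x ∈ U j}.Finite ∧ {j | x ∈ U j}.ncard ≤ M)
    (hlip : ∀ j, LipschitzWith 1 (φ j))
    (hsupp : ∀ j x, x ∉ U j → φ j x = 0) :
    ∀ x y : X, Real.sqrt (∑' j, (φ j x - φ j y) ^ 2) ≤ Real.sqrt M * dist x y := by
  intro x y
  have hφ : ∀ x, (Function.support fun j ↦ φ j x).Finite := fun x ↦
    (hmult x).1.subset fun j hj ↦ not_imp_comm.1 (hsupp j x) hj
  obtain ⟨γ, hγ0, hγd, hγ⟩ := hgeo x y
  have hγlip : LipschitzOnWith 1 γ (Icc 0 (dist x y)) :=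
    .of_dist_le_mul fun s hs t ht ↦ by simp [hγ s hs t ht, Real.dist_eq]
  have hglobal := dist_comp_le_mul_of_eventually_dist_le_mul (Real.sqrt_nonneg M)
    (eventually_dist_ellTwoMap_le hopen hmult hlip hsupp hφ) dist_nonneg hγlip
  rwa [hγ0, hγd, dist_comm, dist_ellTwoMap] at hglobal

/-- In a geodesic metric space, a family of 1-Lipschitz functions `φ_j : X → [0,C]`
supported in the sets of an open cover of multiplicity at most `M` assembles into a
`√M`-Lipschitz map into `ℓ²(J)`. -/
theorem cover_assembly_sqrt_lipschitz {X : Type*} [MetricSpace X] {J : Type*}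
    (U : J → Set X) (φ : J → X → ℝ) (M : ℕ) (C : ℝ)
    (hgeo : ∀ x y : X, ∃ γ : ℝ → X, γ 0 = x ∧ γ (dist x y) = y ∧
      ∀ s ∈ Set.Icc (0 : ℝ) (dist x y), ∀ t ∈ Set.Icc (0 : ℝ) (dist x y),
        dist (γ s) (γ t) = |s - t|)
    (hopen : ∀ j, IsOpen (U j))
    (hcover : ∀ x, ∃ j, x ∈ U j)
    (hmult : ∀ x, {j | x ∈ U j}.Finite ∧ {j | x ∈ U j}.ncard ≤ M)
    (hlip : ∀ j, LipschitzWith 1 (φ j))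
    (hrange : ∀ j x, φ j x ∈ Set.Icc 0 C)
    (hsupp : ∀ j x, x ∉ U j → φ j x = 0) :
    ∀ x y : X, Real.sqrt (∑' j, (φ j x - φ j y) ^ 2) ≤ Real.sqrt M * dist x y :=
  cover_assembly_sqrt_lipschitz_general U φ M hgeo hopen hmult hlip hsupp
end

section
/- In D_n, if d_B(x,y) ≥ 3R then ‖φ_R(x) − φ_R(y)‖₂ ≥ R√2/8, where φ_R(x) = (max(3R/2 − d_B(p,x), 0))_{p ∈ RG^{n+}}. -/
open scoped BigOperators

/-- Diagrams in `D_n` with all points in `RG⁺`, as multisets of cardinality `N`. -/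
def RGn (R : ℝ) (N : ℕ) : Set (Multiset D1) :=
  {m | Multiset.card m = N ∧ ∀ a ∈ m, a ∈ RGplus R}

/-- Bottleneck distance from a tuple to a diagram presented as a multiset. -/
noncomputable def dBnm {N : ℕ} (x : Fin N → D1) (m : Multiset D1) : ℝ :=
  sInf {r | ∃ g : Fin N → D1, (↑(List.ofFn g) : Multiset D1) = m ∧ dBn x g = r}

/-!
Every point of `D1` lies within `11R/8` of `RG⁺` (snap the birth to an odd and the death to an
even multiple of `R`, or go to the diagonal), so every `x` has a grid diagram `mₓ` with
`d_B(x, mₓ) ≤ 11R/8`, whence `φ_{R,mₓ}(x) ≥ R/8`. By the triangle inequality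
`d_B(y, mₓ) ≥ 3R - 11R/8 > 3R/2`, so `φ_{R,mₓ}(y) = 0`; symmetrically for `m_y`. The two distinct
coordinates `mₓ`, `m_y` contribute `2 (R/8)²` to the squared norm. The sum is a genuine (not junk)
`tsum`: grid points within `3R/2` of a point are far from the diagonal, hence near it in `ℓ∞`, so
only finitely many coordinates are nonzero.
-/

noncomputable def halfPers : D1 → ℝ
  | none => 0
  | some p => (p.1.2 - p.1.1) / 2

/-- `IsNear a b r`: `a` and `b` are off-diagonal points that can be matched to each other at
cost `≤ r`; the alternative is matching both to the diagonal, at cost `max (halfPers a) (halfPers b)`. -/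
def IsNear : D1 → D1 → ℝ → Prop
  | some p, some q, r => |p.1.1 - q.1.1| ≤ r ∧ |p.1.2 - q.1.2| ≤ r
  | _, _, _ => False

lemma halfPers_nonneg (a : D1) : 0 ≤ halfPers a := by
  cases a with
  | none => exact le_rfl
  | some p => simp only [halfPers]; linarith [p.2.2]

lemma IsNear.symm {a b : D1} {r : ℝ} (h : IsNear a b r) : IsNear b a r := by
  match a, b, h with
  | some _, some _, h => simpa only [IsNear, abs_sub_comm] using h

lemma IsNear.trans {a b c : D1} {r s : ℝ} (hab : IsNear a b r) (hbc : IsNear b c s) :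
    IsNear a c (r + s) := by
  match a, b, c, hab, hbc with
  | some _, some _, some _, ⟨h₁, h₂⟩, ⟨h₃, h₄⟩ =>
    exact ⟨(abs_sub_le _ _ _).trans (add_le_add h₁ h₃),
      (abs_sub_le _ _ _).trans (add_le_add h₂ h₄)⟩

lemma IsNear.halfPers_le {a b : D1} {r : ℝ} (h : IsNear a b r) :
    halfPers a ≤ halfPers b + r := by
  match a, b, h with
  | some _, some _, ⟨h₁, h₂⟩ =>
    simp only [halfPers]
    linarith [abs_le.1 h₁, abs_le.1 h₂]

lemma dB_le_iff {a b : D1} {r : ℝ} :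
    dB a b ≤ r ↔ IsNear a b r ∨ (halfPers a ≤ r ∧ halfPers b ≤ r) := by
  match a, b with
  | none, none => simp [dB, IsNear, halfPers]
  | none, some q =>
    have := halfPers_nonneg (some q)
    simp only [dB, IsNear, halfPers, false_or] at this ⊢
    constructor
    · intro h; exact ⟨by linarith, h⟩
    · exact And.right
  | some p, none =>
    have := halfPers_nonneg (some p)
    simp only [dB, IsNear, halfPers, false_or] at this ⊢
    constructor
    · intro h; exact ⟨h, by linarith⟩
    · exact And.left
  | some p, some q => simp only [dB, IsNear, halfPers, min_le_iff, max_le_iff]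

lemma dB_nonneg (a b : D1) : 0 ≤ dB a b := by
  match a, b with
  | none, none => exact le_rfl
  | none, some q => exact halfPers_nonneg (some q)
  | some p, none => exact halfPers_nonneg (some p)
  | some p, some q =>
    exact le_min (le_max_of_le_left (abs_nonneg _)) (le_max_of_le_left (halfPers_nonneg (some p)))

lemma dB_comm (a b : D1) : dB a b = dB b a :=
  le_antisymm (dB_le_iff.2 ((dB_le_iff.1 le_rfl).imp IsNear.symm And.symm))
    (dB_le_iff.2 ((dB_le_iff.1 le_rfl).imp IsNear.symm And.symm))

lemma dB_triangle (a b c : D1) : dB a c ≤ dB a b + dB b c := by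
  have hu := dB_nonneg a b
  have hv := dB_nonneg b c
  rw [dB_le_iff]
  rcases dB_le_iff.1 (le_refl (dB a b)) with hab | ⟨ha, hb⟩ <;>
    rcases dB_le_iff.1 (le_refl (dB b c)) with hbc | ⟨hb', hc⟩
  · exact Or.inl (hab.trans hbc)
  · exact Or.inr ⟨by linarith [hab.halfPers_le], by linarith⟩
  · exact Or.inr ⟨by linarith, by linarith [hbc.symm.halfPers_le]⟩
  · exact Or.inr ⟨by linarith, by linarith⟩

lemma Multiset.exists_coe_ofFn_eq {α : Type*} {N : ℕ} {m : Multiset α} (hm : m.card = N) :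
    ∃ g : Fin N → α, (↑(List.ofFn g) : Multiset α) = m := by
  obtain ⟨l, rfl⟩ := Quot.exists_rep m
  obtain rfl : l.length = N := hm
  exact ⟨fun i => l[i], by simp⟩

lemma exists_perm_eq_comp_of_coe_ofFn_eq {α : Type*} {N : ℕ} {g g' : Fin N → α}
    (h : (↑(List.ofFn g) : Multiset α) = ↑(List.ofFn g')) :
    ∃ σ : Equiv.Perm (Fin N), g = g' ∘ σ := by
  classical
  have hfiber : ∀ a, Fintype.card {i // g i = a} = Fintype.card {i // g' i = a} := by
    intro a
    have := congrArg (Multiset.count a) h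
    simp only [← Fin.univ_val_map, Multiset.count_map] at this
    simp only [Fintype.card_subtype, eq_comm (b := a)]
    exact this
  let e a : {i // g i = a} ≃ {i // g' i = a} := Fintype.equivOfCardEq (hfiber a)
  refine ⟨(Equiv.sigmaFiberEquiv g).symm.trans
    ((Equiv.sigmaCongrRight e).trans (Equiv.sigmaFiberEquiv g')), funext fun i => ?_⟩
  exact ((e (g i)) ⟨i, rfl⟩).2.symm

lemma le_dBmax {N : ℕ} (x y : Fin N → D1) (i : Fin N) : dB (x i) (y i) ≤ dBmax x y :=
  (Finset.le_fold_max _).mpr (Or.inr ⟨i, Finset.mem_univ i, le_rfl⟩)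

lemma dBmax_le {N : ℕ} {x y : Fin N → D1} {c : ℝ} (h0 : 0 ≤ c)
    (h : ∀ i, dB (x i) (y i) ≤ c) : dBmax x y ≤ c :=
  (Finset.fold_max_le _).mpr ⟨h0, fun i _ => h i⟩

lemma dBmax_lt {N : ℕ} {x y : Fin N → D1} {c : ℝ} (h : dBmax x y < c) (i : Fin N) :
    dB (x i) (y i) < c :=
  (le_dBmax x y i).trans_lt h

lemma exists_dBn_eq_dBmax {N : ℕ} (x y : Fin N → D1) :
    ∃ ψ : Equiv.Perm (Fin N), dBn x y = dBmax x (y ∘ ψ) := by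
  obtain ⟨ψ, -, h⟩ := Finset.exists_mem_eq_inf' Finset.univ_nonempty
    (fun ψ : Equiv.Perm (Fin N) => dBmax x (y ∘ ψ))
  exact ⟨ψ, h⟩

lemma dBn_nonneg {N : ℕ} (x y : Fin N → D1) : 0 ≤ dBn x y := by
  obtain ⟨ψ, h⟩ := exists_dBn_eq_dBmax x y
  exact h ▸ (Finset.le_fold_max _).mpr (Or.inl le_rfl)

lemma dBn_le_dBmax {N : ℕ} (x y : Fin N → D1) : dBn x y ≤ dBmax x y :=
  Finset.inf'_le (fun ψ : Equiv.Perm (Fin N) => dBmax x (y ∘ ψ)) (Finset.mem_univ 1)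

lemma dBn_le_add_comp {N : ℕ} (x y g : Fin N → D1) (σ : Equiv.Perm (Fin N)) :
    dBn x y ≤ dBn x (g ∘ σ) + dBn y g := by
  obtain ⟨ψ₁, h₁⟩ := exists_dBn_eq_dBmax x (g ∘ σ)
  obtain ⟨ψ₂, h₂⟩ := exists_dBn_eq_dBmax y g
  let π : Equiv.Perm (Fin N) := ψ₁.trans (σ.trans ψ₂.symm)
  refine (Finset.inf'_le _ (Finset.mem_univ π)).trans
    (dBmax_le (add_nonneg (dBn_nonneg _ _) (dBn_nonneg _ _)) fun i => ?_)
  have hmid : g (σ (ψ₁ i)) = g (ψ₂ (π i)) := by simp [π]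
  calc dB (x i) (y (π i))
      ≤ dB (x i) (g (σ (ψ₁ i))) + dB (g (ψ₂ (π i))) (y (π i)) := hmid ▸ dB_triangle _ _ _
    _ ≤ dBn x (g ∘ σ) + dBn y g := by
      rw [h₁, h₂, dB_comm (g _)]
      exact add_le_add (le_dBmax x (g ∘ σ ∘ ψ₁) i) (le_dBmax y (g ∘ ψ₂) (π i))

section dBnm

variable {N : ℕ} {x : Fin N → D1} {m : Multiset D1}

lemma dBnm_le {g : Fin N → D1} (h : (↑(List.ofFn g) : Multiset D1) = m) :
    dBnm x m ≤ dBn x g :=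
  csInf_le ⟨0, by rintro r ⟨g, -, rfl⟩; exact dBn_nonneg x g⟩ ⟨g, h, rfl⟩

lemma le_dBnm {c : ℝ} (hm : m.card = N)
    (h : ∀ g : Fin N → D1, (↑(List.ofFn g) : Multiset D1) = m → c ≤ dBn x g) :
    c ≤ dBnm x m := by
  obtain ⟨g, hg⟩ := Multiset.exists_coe_ofFn_eq hm
  exact le_csInf ⟨_, g, hg, rfl⟩ (by rintro r ⟨g, hg, rfl⟩; exact h g hg)

lemma exists_dBn_lt_of_dBnm_lt {c : ℝ} (hm : m.card = N) (h : dBnm x m < c) :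
    ∃ g : Fin N → D1, (↑(List.ofFn g) : Multiset D1) = m ∧ dBn x g < c := by
  obtain ⟨g, hg⟩ := Multiset.exists_coe_ofFn_eq hm
  obtain ⟨_, ⟨g, hg, rfl⟩, hlt⟩ := exists_lt_of_csInf_lt (by exact ⟨_, g, hg, rfl⟩) h
  exact ⟨g, hg, hlt⟩

lemma dBn_le_dBnm_add (x y : Fin N → D1) (hm : m.card = N) :
    dBn x y ≤ dBnm x m + dBnm y m := by
  suffices dBn x y - dBnm y m ≤ dBnm x m by linarith
  refine le_dBnm hm fun g₁ hg₁ => ?_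
  suffices dBn x y - dBn x g₁ ≤ dBnm y m by linarith
  refine le_dBnm hm fun g₂ hg₂ => ?_
  obtain ⟨σ, rfl⟩ := exists_perm_eq_comp_of_coe_ofFn_eq (hg₁.trans hg₂.symm)
  linarith [dBn_le_add_comp x y g₂ σ]

lemma exists_dB_lt_of_mem_of_dBnm_lt {c : ℝ} (hm : m.card = N) (h : dBnm x m < c)
    {a : D1} (ha : a ∈ m) : ∃ i, dB (x i) a < c := by
  obtain ⟨g, rfl, hg⟩ := exists_dBn_lt_of_dBnm_lt hm h
  obtain ⟨ψ, hψ⟩ := exists_dBn_eq_dBmax x g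
  obtain ⟨j, rfl⟩ := List.mem_ofFn.1 (Multiset.mem_coe.1 ha)
  rw [hψ] at hg
  refine ⟨ψ.symm j, ?_⟩
  simpa only [Function.comp_apply, Equiv.apply_symm_apply] using dBmax_lt hg (ψ.symm j)

end dBnm

lemma exists_nat_mul_le_lt {a s : ℝ} (ha : 0 < a) (hs : 0 ≤ s) :
    ∃ j : ℕ, j * a ≤ s ∧ s < (j + 1) * a :=
  ⟨⌊s / a⌋₊, (le_div_iff₀ ha).1 (Nat.floor_le (div_nonneg hs ha.le)),
    (div_lt_iff₀ ha).1 (Nat.lt_floor_add_one _)⟩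

lemma exists_odd_abs_sub_mul_le {R t : ℝ} (hR : 0 < R) (ht : 0 ≤ t) :
    ∃ m : ℕ, Odd m ∧ |t - m * R| ≤ R := by
  obtain ⟨j, hj₁, hj₂⟩ := exists_nat_mul_le_lt (by linarith : 0 < 2 * R) ht
  refine ⟨2 * j + 1, odd_two_mul_add_one j, abs_le.2 ⟨?_, ?_⟩⟩ <;> push_cast <;> linarith

lemma exists_even_abs_sub_mul_le {R t : ℝ} (hR : 0 < R) (ht : 0 ≤ t) :
    ∃ k : ℕ, Even k ∧ |t - k * R| ≤ R := by
  obtain ⟨j, hj₁, hj₂⟩ := exists_nat_mul_le_lt (by linarith : 0 < 2 * R) (by linarith : 0 ≤ t + R)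
  refine ⟨2 * j, even_two_mul j, abs_le.2 ⟨?_, ?_⟩⟩ <;> push_cast <;> linarith

lemma some_mem_RGplus {R : ℝ} {m k : ℕ} {p : {p : ℝ × ℝ // 0 ≤ p.1 ∧ p.1 < p.2}}
    (hm : Odd m) (hk : Even k) (hmk : m + 3 ≤ k) (hp : p.1 = ((m : ℝ) * R, (k : ℝ) * R)) :
    some p ∈ RGplus R :=
  Or.inr ⟨p, rfl, m, k, hm, hm.pos, hk, by have := hm.pos; omega, hmk, hp⟩

lemma exists_mem_RGplus_dB_le {R : ℝ} (hR : 0 < R) (z : D1) :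
    ∃ a ∈ RGplus R, dB z a ≤ 11 * R / 8 := by
  rcases le_or_gt (halfPers z) (11 * R / 8) with hz | hz
  · refine ⟨none, Set.mem_insert _ _, dB_le_iff.2 (Or.inr ⟨hz, by simp [halfPers]; linarith⟩)⟩
  obtain _ | q := z
  · simp [halfPers] at hz; linarith
  obtain ⟨hq₁, hq₁₂⟩ := q.2
  simp only [halfPers] at hz
  obtain ⟨m, hm, hbirth⟩ := exists_odd_abs_sub_mul_le hR hq₁
  obtain ⟨k, hk, hdeath⟩ := exists_even_abs_sub_mul_le hR (hq₁.trans hq₁₂.le)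
  obtain ⟨k', hk', hmk', hdeath'⟩ :
      ∃ k' : ℕ, Even k' ∧ m + 3 ≤ k' ∧ |q.1.2 - k' * R| ≤ 11 * R / 8 := by
    rcases le_total k (m + 3) with h | h
    · -- the death coordinate is still within `5R/4` of `(m + 3) R`, as `q` is far from the diagonal
      refine ⟨m + 3, hm.add_odd (by decide), le_rfl, ?_⟩
      have : (k : ℝ) ≤ m + 3 := by exact_mod_cast h
      rw [abs_le] at hbirth hdeath ⊢; push_cast
      constructor <;> nlinarith
    · exact ⟨k, hk, h, hdeath.trans (by linarith)⟩
  have hmk : (m : ℝ) * R < k' * R := by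
    have : (m : ℝ) + 3 ≤ k' := by exact_mod_cast hmk'
    nlinarith
  exact ⟨some ⟨((m : ℝ) * R, (k' : ℝ) * R), by positivity, hmk⟩, some_mem_RGplus hm hk' hmk' rfl,
    dB_le_iff.2 (Or.inl ⟨hbirth.trans (by linarith), hdeath'⟩)⟩

lemma three_half_le_halfPers {R : ℝ} (hR : 0 ≤ R) {p : {p : ℝ × ℝ // 0 ≤ p.1 ∧ p.1 < p.2}}
    (hp : some p ∈ RGplus R) : 3 * R / 2 ≤ halfPers (some p) := by
  obtain h | ⟨_, h, m, k, -, -, -, -, hmk, hpk⟩ := hp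
  · cases h
  cases Option.some_inj.1 h
  have : (m : ℝ) + 3 ≤ k := by exact_mod_cast hmk
  simp only [halfPers, hpk]
  nlinarith

lemma isNear_of_dB_lt {R : ℝ} (hR : 0 ≤ R) {z : D1} {p : {p : ℝ × ℝ // 0 ≤ p.1 ∧ p.1 < p.2}}
    (hp : some p ∈ RGplus R) (h : dB z (some p) < 3 * R / 2) :
    IsNear z (some p) (dB z (some p)) := by
  have := three_half_le_halfPers hR hp
  exact (dB_le_iff.1 le_rfl).resolve_right fun ⟨_, hle⟩ => by linarith

lemma finite_RGplus_snd_le {R : ℝ} (hR : 0 < R) (C : ℝ) :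
    {a | a ∈ RGplus R ∧ ∀ p, a = some p → p.1.2 ≤ C}.Finite := by
  let grid : ℕ × ℕ → Option (ℝ × ℝ) := fun mk => some ((mk.1 : ℝ) * R, (mk.2 : ℝ) * R)
  let K := ⌊C / R⌋₊
  refine ((Set.finite_Iic (K, K)).image grid |>.insert none).preimage
    (Option.map_injective Subtype.val_injective).injOn |>.subset ?_
  rintro a ⟨h | ⟨p, rfl, m, k, -, -, -, -, hmk, hpk⟩, hC⟩
  · simp [h]
  have hk : k ≤ K := Nat.le_floor ((le_div_iff₀ hR).2 (by simpa [hpk] using hC p rfl))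
  exact Or.inr ⟨(m, k), ⟨by simp only; omega, hk⟩, by simp [grid, hpk]⟩

lemma finite_RGplus_dB_lt {R : ℝ} (hR : 0 < R) (z : D1) :
    {a | a ∈ RGplus R ∧ dB z a < 3 * R / 2}.Finite := by
  obtain _ | q := z
  · refine (Set.finite_singleton none).subset ?_
    rintro (_ | p) ⟨hp, hd⟩
    · rfl
    · exact (isNear_of_dB_lt hR.le hp hd : False).elim
  · refine (finite_RGplus_snd_le hR (q.1.2 + 3 * R / 2)).subset ?_
    rintro a ⟨ha, hd⟩
    refine ⟨ha, ?_⟩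
    rintro p rfl
    have := abs_le.1 (isNear_of_dB_lt hR.le ha hd).2
    linarith

lemma Multiset.finite_setOf_card_eq_of_forall_mem {α : Type*} {S : Set α} (hS : S.Finite)
    (N : ℕ) : {m : Multiset α | m.card = N ∧ ∀ a ∈ m, a ∈ S}.Finite := by
  classical
  refine (Set.finite_Iic (N • hS.toFinset.val)).subset ?_
  rintro m ⟨hcard, hS'⟩
  refine Multiset.le_iff_count.2 fun a => ?_
  by_cases ha : a ∈ m
  · rw [Multiset.count_nsmul, Multiset.count_eq_one_of_mem hS.toFinset.nodup
      (hS.mem_toFinset.2 (hS' a ha)), mul_one, ← hcard]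
    exact Multiset.count_le_card a m
  · simp [Multiset.count_eq_zero_of_notMem ha]

lemma finite_RGn_dBnm_lt {R : ℝ} (hR : 0 < R) {N : ℕ} (x : Fin N → D1) :
    {m | m ∈ RGn R N ∧ dBnm x m < 3 * R / 2}.Finite := by
  refine (Multiset.finite_setOf_card_eq_of_forall_mem
    (Set.finite_iUnion fun i => finite_RGplus_dB_lt hR (x i)) N).subset ?_
  rintro m ⟨⟨hcard, hRG⟩, hlt⟩
  refine ⟨hcard, fun a ha => ?_⟩
  obtain ⟨i, hi⟩ := exists_dB_lt_of_mem_of_dBnm_lt hcard hlt ha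
  exact Set.mem_iUnion.2 ⟨i, hRG a ha, hi⟩

lemma Summable.add_le_tsum_of_ne {ι α : Type*} [AddCommMonoid α] [Preorder α]
    [IsOrderedAddMonoid α] [TopologicalSpace α] [OrderClosedTopology α] {f : ι → α}
    (hf : Summable f) (h0 : ∀ i, 0 ≤ f i) {i j : ι} (hij : i ≠ j) :
    f i + f j ≤ ∑' k, f k := by
  classical
  rw [← Finset.sum_pair hij]
  exact hf.sum_le_tsum _ fun k _ => h0 k

lemma exists_RGn_dBnm_le {R : ℝ} (hR : 0 < R) {N : ℕ} (x : Fin N → D1) :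
    ∃ m ∈ RGn R N, dBnm x m ≤ 11 * R / 8 := by
  choose g hg hd using fun i => exists_mem_RGplus_dB_le hR (x i)
  refine ⟨List.ofFn g, ⟨by simp, fun a ha => ?_⟩,
    (dBnm_le rfl).trans ((dBn_le_dBmax x g).trans (dBmax_le (by positivity) hd))⟩
  obtain ⟨i, rfl⟩ := List.mem_ofFn.1 (Multiset.mem_coe.1 ha)
  exact hg i

/-- The coordinate `φ_{R,m}(x)` of the feature map `φ_R`. -/
noncomputable def phiR (R : ℝ) {N : ℕ} (x : Fin N → D1) (m : Multiset D1) : ℝ :=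
  max (3 * R / 2 - dBnm x m) 0

section phiR

variable {R : ℝ} {N : ℕ} {x : Fin N → D1} {m : Multiset D1}

lemma phiR_eq_zero (h : 3 * R / 2 ≤ dBnm x m) : phiR R x m = 0 :=
  max_eq_right (by linarith)

lemma le_phiR (h : dBnm x m ≤ 11 * R / 8) : R / 8 ≤ phiR R x m :=
  le_max_of_le_left (by linarith)

lemma summable_sq_phiR_sub (hR : 0 < R) (x y : Fin N → D1) :
    Summable fun m : RGn R N => (phiR R x m - phiR R y m) ^ 2 := by
  refine summable_of_hasFiniteSupport <| ((finite_RGn_dBnm_lt hR x).union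
    (finite_RGn_dBnm_lt hR y)).preimage Subtype.val_injective.injOn |>.subset fun m hm => ?_
  rcases lt_or_ge (dBnm x m) (3 * R / 2) with hx | hx
  · exact Or.inl ⟨m.2, hx⟩
  rcases lt_or_ge (dBnm y m) (3 * R / 2) with hy | hy
  · exact Or.inr ⟨m.2, hy⟩
  exact absurd (by simp [phiR_eq_zero hx, phiR_eq_zero hy]) hm

end phiR

/-- If `d_B(x,y) ≥ 3R` then `‖φ_R(x) − φ_R(y)‖₂ ≥ R√2/8`, where
`φ_R(x) = (max (3R/2 − d_B(p,x)) 0)_{p ∈ RGⁿ⁺}`. -/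
theorem phiR_far_lower_bound {N : ℕ} (R : ℝ) (hR : 0 < R)
    (x y : Fin N → D1) (hxy : 3 * R ≤ dBn x y) :
    R * Real.sqrt 2 / 8 ≤ Real.sqrt (∑' m : RGn R N,
      (max (3 * R / 2 - dBnm x m.1) 0 - max (3 * R / 2 - dBnm y m.1) 0) ^ 2) := by
  obtain ⟨mx, hmx, hx⟩ := exists_RGn_dBnm_le hR x
  obtain ⟨my, hmy, hy⟩ := exists_RGn_dBnm_le hR y
  have hyx : 3 * R / 2 ≤ dBnm y mx := by linarith [dBn_le_dBnm_add x y hmx.1]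
  have hxy' : 3 * R / 2 ≤ dBnm x my := by linarith [dBn_le_dBnm_add x y hmy.1]
  have hne : (⟨mx, hmx⟩ : RGn R N) ≠ ⟨my, hmy⟩ := fun h => by
    cases Subtype.mk.inj h; linarith
  have hsum := (summable_sq_phiR_sub hR x y).add_le_tsum_of_ne (fun _ => sq_nonneg _) hne
  rw [phiR_eq_zero hyx, phiR_eq_zero hxy'] at hsum
  refine Real.le_sqrt_of_sq_le ?_
  calc (R * Real.sqrt 2 / 8) ^ 2 = (R / 8) ^ 2 + (R / 8) ^ 2 := by
        rw [div_pow, mul_pow, Real.sq_sqrt zero_le_two]; ring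
    _ ≤ (phiR R x mx - 0) ^ 2 + (0 - phiR R y my) ^ 2 := by
        rw [sub_zero, zero_sub, neg_sq]
        gcongr <;> [exact le_phiR hx; exact le_phiR hy]
    _ ≤ _ := hsum
end

section
/- For any finite collection p_1,...,p_k of persistence diagrams in D_n, there exist uncountably many distinct persistence diagrams a_t ∈ D_n ∩ [0,L]² (t ∈ ℝ) such that for each j the bottleneck distance d_B(a_t, p_j) is independent of t. In particular, no map of the form x ↦ (F_1(d_B(x,p_1)),...,F_k(d_B(x,p_k))) (for any functions F_j on [0,∞)) restricted to D_n ∩ [0,L]² is injective. -/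
open scoped BigOperators

/-!
All points of `a_t` sit at a single point `(x_t, x_t + 2ε)` of half-persistence `ε`. Its
bottleneck distance to a point `d` is `max ε (pers d / 2)` (send both to the diagonal) unless
`x_t` lies within `2ε` of a position determined by `d`, where a direct matching is cheaper.
The `k N` such forbidden intervals have length `4ε`, so by pigeonhole one of `k N + 1` slots of
width `ε` spaced `5ε` apart avoids them all. Letting `x_t` range injectively over that slot
gives continuum many diagrams whose distances to every `p_j` do not depend on `t`.
-/

open Set Function

noncomputable section

def nearDiagonal (x ε : ℝ) (hx : 0 ≤ x) (hε : 0 < ε) : D1 :=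
  some ⟨(x, x + 2 * ε), hx, by linarith⟩

def halfPersistence : D1 → ℝ
  | none => 0
  | some q => (q.1.2 - q.1.1) / 2

-- Matching `nearDiagonal x ε` to `d` directly can beat sending both to the diagonal only when
-- `x` is within `2ε` of this position.
def directMatchCenter (ε : ℝ) : D1 → ℝ
  | none => 0
  | some q => q.1.2 - max ε ((q.1.2 - q.1.1) / 2)

end

theorem nearDiagonal_injective {x y ε : ℝ} {hx : 0 ≤ x} {hy : 0 ≤ y} {hε : 0 < ε}
    (h : nearDiagonal x ε hx hε = nearDiagonal y ε hy hε) : x = y := by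
  simp only [nearDiagonal, Option.some.injEq, Subtype.mk.injEq, Prod.mk.injEq] at h
  exact h.1

theorem inBox_nearDiagonal {x ε L : ℝ} {hx : 0 ≤ x} {hε : 0 < ε} (h : x + 2 * ε ≤ L) :
    inBox L (nearDiagonal x ε hx hε) :=
  ⟨⟨hx, by linarith⟩, ⟨by linarith, h⟩⟩

theorem dB_nearDiagonal {x ε : ℝ} (hx : 0 ≤ x) (hε : 0 < ε) {d : D1}
    (hd : x ∉ Metric.ball (directMatchCenter ε d) (2 * ε)) :
    dB (nearDiagonal x ε hx hε) d = max ε (halfPersistence d) := by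
  have hhalf : (x + 2 * ε - x) / 2 = ε := by ring
  cases d with
  | none => exact hhalf.trans (max_eq_left hε.le).symm
  | some q =>
    obtain ⟨⟨q₁, q₂⟩, _, hq⟩ := q
    change min (max |x - q₁| |x + 2 * ε - q₂|) (max ((x + 2 * ε - x) / 2) ((q₂ - q₁) / 2))
      = max ε ((q₂ - q₁) / 2)
    rw [hhalf]
    refine min_eq_right ?_
    set M := max ε ((q₂ - q₁) / 2)
    have hM : M ≤ ε + (q₂ - q₁) / 2 := max_le (by linarith) (by linarith)
    have hfar : 2 * ε ≤ |x - (q₂ - M)| := by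
      simpa only [directMatchCenter, Metric.mem_ball, Real.dist_eq, not_lt] using hd
    rcases le_abs'.mp hfar with h | h
    · exact le_max_of_le_right (le_abs'.mpr (Or.inl (by linarith)))
    · exact le_max_of_le_left (le_abs'.mpr (Or.inr (by linarith)))

theorem dBn_const_congr {N : ℕ} {c c' : D1} {y : Fin N → D1}
    (h : ∀ i, dB c (y i) = dB c' (y i)) :
    dBn (fun _ => c) y = dBn (fun _ => c') y :=
  Finset.inf'_congr _ rfl fun ψ _ => Finset.fold_congr fun i _ => h (ψ i)

theorem exists_slot_disjoint_balls {ι : Type*} [Fintype ι] (c : ι → ℝ) {ρ w : ℝ}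
    (hρ : 0 ≤ ρ) (hw : 0 ≤ w) :
    ∃ r ≤ Fintype.card ι, ∀ i,
      Disjoint (Ioo (r * (2 * ρ + w)) (r * (2 * ρ + w) + w)) (Metric.ball (c i) ρ) := by
  by_contra! hmeet
  choose f hf using fun r : Fin (Fintype.card ι + 1) => hmeet r (Nat.lt_succ_iff.mp r.2)
  obtain ⟨r, r', hne, heq⟩ := Fintype.exists_ne_map_eq_of_card_lt f (by simp)
  -- a ball of diameter `2ρ` cannot meet two slots, which are more than `2ρ` apart
  have slots_apart : ∀ {r r' : Fin (Fintype.card ι + 1)}, r < r' → f r ≠ f r' := by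
    intro r r' hlt heq
    obtain ⟨x, ⟨-, hx⟩, hxc⟩ := not_disjoint_iff.mp (hf r)
    obtain ⟨x', ⟨hx', -⟩, hxc'⟩ := not_disjoint_iff.mp (hf r')
    rw [heq, Metric.mem_ball, Real.dist_eq, abs_lt] at hxc
    rw [Metric.mem_ball, Real.dist_eq, abs_lt] at hxc'
    have hr : ((r : ℕ) : ℝ) + 1 ≤ (r' : ℕ) := by exact_mod_cast hlt
    nlinarith
  rcases hne.lt_or_gt with hlt | hlt
  · exact slots_apart hlt heq
  · exact slots_apart hlt heq.symm

theorem exists_injective_mem_Ioo {a b : ℝ} (h : a < b) :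
    ∃ f : ℝ → ℝ, Injective f ∧ ∀ t, f t ∈ Ioo a b := by
  obtain ⟨e⟩ := Cardinal.eq.mp (Cardinal.mk_real.trans (Cardinal.mk_Ioo_real h).symm)
  exact ⟨fun t => e t, Subtype.val_injective.comp e.injective, fun t => (e t).2⟩

theorem exists_injective_family_dBn_const {ι : Type*} [Fintype ι] {N : ℕ} (hN : 0 < N)
    (p : ι → Fin N → D1) {L : ℝ} (hL : 0 < L) :
    ∃ a : ℝ → Fin N → D1,
      (∀ s t : ℝ, (∃ ψ : Equiv.Perm (Fin N), a s = a t ∘ ψ) → s = t) ∧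
      (∀ t i, inBox L (a t i)) ∧
      (∀ j, ∀ s t : ℝ, dBn (a s) (p j) = dBn (a t) (p j)) := by
  set P := Fintype.card (ι × Fin N)
  set ε := L / (5 * P + 3)
  have hε : 0 < ε := by positivity
  have hεL : (5 * P + 3) * ε = L := mul_div_cancel₀ L (by positivity)
  obtain ⟨r, hrP, hr⟩ := exists_slot_disjoint_balls
    (fun w : ι × Fin N => directMatchCenter ε (p w.1 w.2)) (by positivity : 0 ≤ 2 * ε) hε.le
  obtain ⟨x, hx_inj, hx_mem⟩ := exists_injective_mem_Ioo (lt_add_of_pos_right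
    ((r : ℝ) * (2 * (2 * ε) + ε)) hε)
  have hrP' : (r : ℝ) ≤ P := by exact_mod_cast hrP
  have hx₀ : ∀ t, 0 ≤ x t := fun t => by nlinarith [(hx_mem t).1]
  have hxL : ∀ t, x t + 2 * ε ≤ L := fun t => by nlinarith [(hx_mem t).2]
  have hdist : ∀ t (w : ι × Fin N), dB (nearDiagonal (x t) ε (hx₀ t) hε) (p w.1 w.2)
      = max ε (halfPersistence (p w.1 w.2)) :=
    fun t w => dB_nearDiagonal _ _ (disjoint_left.mp (hr w) (hx_mem t))
  refine ⟨fun t _ => nearDiagonal (x t) ε (hx₀ t) hε, ?_, fun t _ => inBox_nearDiagonal (hxL t),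
    fun j s t => dBn_const_congr fun i => (hdist s (j, i)).trans (hdist t (j, i)).symm⟩
  rintro s t ⟨ψ, h⟩
  exact hx_inj (nearDiagonal_injective (hy := hx₀ t) (congrFun h ⟨0, hN⟩))

/-- For any finite collection of diagrams `p₁,…,p_k ∈ D_n` there are uncountably
many distinct diagrams `a_t ∈ D_n ∩ [0,L]²` whose bottleneck distances to each `p_j`
are independent of `t`; consequently, no map built from the distances to the `p_j`
is injective on `D_n ∩ [0,L]²`. -/
theorem not_injective_from_distances {N k : ℕ} (hN : 0 < N)
    (p : Fin k → (Fin N → D1)) (L : ℝ) (hL : 0 < L) :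
    (∃ a : ℝ → (Fin N → D1),
      (∀ s t : ℝ, (∃ ψ : Equiv.Perm (Fin N), a s = a t ∘ ψ) → s = t) ∧
      (∀ t i, inBox L (a t i)) ∧
      (∀ j : Fin k, ∀ s t : ℝ, dBn (a s) (p j) = dBn (a t) (p j))) ∧
    (∀ F : Fin k → ℝ → ℝ, ∃ x y : Fin N → D1,
      (∀ i, inBox L (x i)) ∧ (∀ i, inBox L (y i)) ∧
      (¬ ∃ ψ : Equiv.Perm (Fin N), x = y ∘ ψ) ∧
      ∀ j : Fin k, F j (dBn x (p j)) = F j (dBn y (p j))) := by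
  obtain ⟨a, ha_inj, ha_box, ha_dist⟩ := exists_injective_family_dBn_const hN p hL
  refine ⟨⟨a, ha_inj, ha_box, ha_dist⟩, fun F => ⟨a 0, a 1, ha_box 0, ha_box 1, ?_, ?_⟩⟩
  · exact fun h => zero_ne_one (ha_inj 0 1 h)
  · exact fun j => by rw [ha_dist j 0 1]
end

section
/- For s < 0 and the function f_s(x,y) = arg((x,y) − (s,s)) (angle of the vector (x−s, y−s)) on T = {(x,y) ∈ [0,L]² : y ≥ x}, the map F = (F_{s_i})_{i=1}^{n+1} : D_n ∩ [0,L]² → ℝ^{n(n+1)} is injective and continuous (hence a topological embedding by compactness), where each F_{s_i}(p) lists the f_{s_i}-values of the n points of the diagram p in nondecreasing order, and s_1,...,s_{n+1} are pairwise distinct negative reals. -/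
open scoped BigOperators

/-- The angle of a diagram point with respect to `(s,s)`, `s < 0`; the
diagonal `Δ` gets the angle `π/4`. -/
noncomputable def fAngle (s : ℝ) : D1 → ℝ
  | none => Real.pi / 4
  | some p => Real.arctan ((p.1.2 - s) / (p.1.1 - s))

/-- The `f_s`-values of the points of a diagram, listed in nondecreasing order. -/
noncomputable def sortedVals {N : ℕ} (s : ℝ) (x : Fin N → D1) : Fin N → ℝ :=
  (fAngle s ∘ x) ∘ Tuple.sort (fAngle s ∘ x)

/-!
The angle `f_s(v)` pins down the ray from `(s,s)` through `v`, and rays issued from two distinct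
points of the diagonal meet at most once, so any two of the maps `f_{sᵢ}` jointly separate points.
Hence, if for a point `v` every one of the `n + 1` maps had a "false match" `f_{sᵢ}(w) = f_{sᵢ}(v)`
with `w ≠ v` in the diagram, these `w` would be `n + 1` distinct points of an `n`-point diagram.
So some `f_{sᵢ}` counts `v` exactly, and the sorted value lists determine every multiplicity.
Continuity: each `f_s` is Lipschitz for the bottleneck distance on `[0,L]²`, and sorting is
`1`-Lipschitz for the sup distance along any matching.
-/

open Finset Real

section Sorting

variable {n : ℕ}

theorem Tuple.apply_sort_le_of_le_comp_perm {α β : Type*} [LinearOrder α] [LinearOrder β]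
    {a : Fin n → α} {b : Fin n → β} {g : β → α} (hg : Monotone g) (ψ : Equiv.Perm (Fin n))
    (h : ∀ j, a j ≤ g (b (ψ j))) (k : Fin n) :
    a (Tuple.sort a k) ≤ g (b (Tuple.sort b k)) := by
  set t := b (Tuple.sort b k)
  have hk : (k : ℕ) < #{i | b (Tuple.sort b i) ≤ t} :=
    (Tuple.lt_card_le_iff_apply_le_of_monotone (Tuple.monotone_sort b)).2 le_rfl
  have hcard : #{i | b (Tuple.sort b i) ≤ t} ≤ #{i | a (Tuple.sort a i) ≤ g t} :=
    calc #{i | b (Tuple.sort b i) ≤ t}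
        = #{i | b i ≤ t} := card_equiv (Tuple.sort b) (by simp)
      _ ≤ #{i | a i ≤ g t} :=
          card_le_card_of_injOn ψ.symm
            (fun i hi => by simpa using (h _).trans (hg (by simpa using hi)))
            ψ.symm.injective.injOn
      _ = #{i | a (Tuple.sort a i) ≤ g t} := (card_equiv (Tuple.sort a) (by simp)).symm
  exact (Tuple.lt_card_le_iff_apply_le_of_monotone (Tuple.monotone_sort a)).1 (hk.trans_le hcard)

theorem Tuple.abs_apply_sort_sub_apply_sort_le {α : Type*} [AddCommGroup α] [LinearOrder α]
    [IsOrderedAddMonoid α] {a b : Fin n → α} {c : α} (ψ : Equiv.Perm (Fin n))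
    (h : ∀ j, |a j - b (ψ j)| ≤ c) (k : Fin n) :
    |a (Tuple.sort a k) - b (Tuple.sort b k)| ≤ c := by
  rw [abs_sub_le_iff, sub_le_iff_le_add, sub_le_iff_le_add]
  constructor
  · refine apply_sort_le_of_le_comp_perm (monotone_id.const_add c) ψ (fun j => ?_) k
    exact sub_le_iff_le_add.1 (abs_sub_le_iff.1 (h j)).1
  · refine apply_sort_le_of_le_comp_perm (monotone_id.const_add c) ψ.symm (fun j => ?_) k
    simpa using sub_le_iff_le_add.1 (abs_sub_le_iff.1 (h (ψ.symm j))).2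

end Sorting

namespace Multiset

variable {α β ι : Type*} [DecidableEq α] [DecidableEq β]

theorem count_map_apply_eq_count {f : α → β} {m : Multiset α} {v : α}
    (h : ∀ a ∈ m, f a = f v → a = v) : (m.map f).count (f v) = m.count v := by
  rw [count_map, count_eq_card_filter_eq]
  congr 1
  exact filter_congr fun a ha => ⟨fun hfa => (h a ha hfa.symm).symm, fun hva => hva ▸ rfl⟩

theorem count_le_count_map_apply (f : α → β) (m : Multiset α) (v : α) :
    m.count v ≤ (m.map f).count (f v) := by
  rw [count_map, count_eq_card_filter_eq]
  exact card_le_card (monotone_filter_right m fun a hva => hva ▸ rfl)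

theorem exists_count_map_eq_count [Fintype ι] {f : ι → α → β}
    (hsep : _root_.Pairwise fun i j => ∀ u v, f i u = f i v → f j u = f j v → u = v)
    {m : Multiset α} (hm : card m < Fintype.card ι) (v : α) :
    ∃ i, (m.map (f i)).count (f i v) = m.count v := by
  by_contra! hne
  have hwit : ∀ i, ∃ a ∈ m, a ≠ v ∧ f i a = f i v := by
    by_contra! hall
    obtain ⟨i, hi⟩ := hall
    exact hne i (count_map_apply_eq_count fun a ha hfa => by_contra fun hav => hi a ha hav hfa)
  choose a ham hav hfa using hwit
  have hinj : Function.Injective a := fun i j hij => by_contra fun hij' =>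
    hav i (hsep hij' _ _ (hfa i) (hij ▸ hfa j))
  have hcard := Finset.card_le_card_of_injOn (s := Finset.univ) a
    (fun i _ => mem_toFinset.2 (ham i)) hinj.injOn
  rw [Finset.card_univ] at hcard
  exact (hcard.trans (toFinset_card_le m)).not_gt hm

theorem eq_of_forall_map_eq_of_separating [Fintype ι] {f : ι → α → β}
    (hsep : _root_.Pairwise fun i j => ∀ u v, f i u = f i v → f j u = f j v → u = v)
    {m m' : Multiset α} (hm : card m < Fintype.card ι) (hm' : card m' < Fintype.card ι)
    (h : ∀ i, m.map (f i) = m'.map (f i)) : m = m' := by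
  ext v
  obtain ⟨i, hi⟩ := exists_count_map_eq_count hsep hm v
  obtain ⟨i', hi'⟩ := exists_count_map_eq_count hsep hm' v
  refine le_antisymm ?_ ?_
  · rw [← hi', ← h i']; exact count_le_count_map_apply _ _ _
  · rw [← hi, h i]; exact count_le_count_map_apply _ _ _

end Multiset

theorem Equiv.Perm.exists_eq_comp_of_map_univ_eq {ι α : Type*} [Fintype ι] {x y : ι → α}
    (h : Finset.univ.val.map x = Finset.univ.val.map y) : ∃ ψ : Equiv.Perm ι, x = y ∘ ψ := by
  classical
  have hfiber : ∀ v, Fintype.card {j // x j = v} = Fintype.card {j // y j = v} := by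
    intro v
    simpa [Multiset.count_map, Fintype.card_subtype, Finset.card, eq_comm]
      using congrArg (Multiset.count v) h
  let e : ∀ v, {j // x j = v} ≃ {j // y j = v} := fun v => Fintype.equivOfCardEq (hfiber v)
  refine ⟨(Equiv.sigmaFiberEquiv x).symm.trans
    ((Equiv.sigmaCongrRight e).trans (Equiv.sigmaFiberEquiv y)), funext fun j => ?_⟩
  exact ((e (x j) ⟨j, rfl⟩).2).symm

theorem Real.abs_arctan_sub_arctan_le (u v : ℝ) : |arctan u - arctan v| ≤ |u - v| := by
  simpa using Convex.norm_image_sub_le_of_norm_deriv_le (f := arctan) (C := 1)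
    (fun x _ => differentiableAt_arctan x)
    (fun x _ => by
      rw [deriv_arctan, Real.norm_eq_abs, abs_of_pos (by positivity), div_le_one (by positivity)]
      nlinarith [sq_nonneg x])
    convex_univ (Set.mem_univ v) (Set.mem_univ u)

theorem dB_nonneg_s19 (u v : D1) : 0 ≤ dB u v := by
  rcases u with _ | ⟨p, hp, hpq⟩ <;> rcases v with _ | ⟨q, hq, hqq⟩ <;> simp only [dB]
  · exact le_rfl
  · linarith
  · linarith
  · exact le_min (le_max_of_le_left (abs_nonneg _)) (le_max_of_le_left (by linarith))

section Angle

variable {s : ℝ}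

theorem pi_div_four_lt_fAngle_some (hs : s < 0) (p : {p : ℝ × ℝ // 0 ≤ p.1 ∧ p.1 < p.2}) :
    π / 4 < fAngle s (some p) := by
  rw [fAngle, ← arctan_one]
  exact arctan_strictMono ((one_lt_div (by linarith [p.2.1])).2 (by linarith [p.2.2]))

theorem fAngle_sub_pi_div_four_mem_Icc (hs : s < 0) (u : D1) :
    fAngle s u - π / 4 ∈ Set.Icc 0 (2 / (-s) * dB u none) := by
  rcases u with _ | p
  · simp [fAngle, dB]
  refine ⟨sub_nonneg.2 (pi_div_four_lt_fAngle_some hs p).le, ?_⟩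
  obtain ⟨⟨a, b⟩, ha, hab⟩ := p
  have has : 0 < a - s := by linarith
  calc arctan ((b - s) / (a - s)) - π / 4
      = arctan ((b - s) / (a - s)) - arctan 1 := by rw [arctan_one]
    _ ≤ |(b - s) / (a - s) - 1| := (le_abs_self _).trans (abs_arctan_sub_arctan_le _ _)
    _ = (b - a) / (a - s) := by
        rw [div_sub_one has.ne', abs_of_nonneg (div_nonneg (by linarith) has.le)]
        ring_nf
    _ ≤ (b - a) / (-s) := div_le_div_of_nonneg_left (by linarith) (by linarith) (by linarith)
    _ = 2 / (-s) * ((b - a) / 2) := by ring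

theorem abs_fAngle_sub_le_max_dB_none (hs : s < 0) (u v : D1) :
    |fAngle s u - fAngle s v| ≤ 2 / (-s) * max (dB u none) (dB v none) := by
  obtain ⟨hu₀, hu⟩ := fAngle_sub_pi_div_four_mem_Icc hs u
  obtain ⟨hv₀, hv⟩ := fAngle_sub_pi_div_four_mem_Icc hs v
  have hs' : 0 ≤ 2 / (-s) := div_nonneg zero_le_two (by linarith)
  simpa using abs_sub_le_of_nonneg_of_le hu₀
    (hu.trans (mul_le_mul_of_nonneg_left (le_max_left _ _) hs')) hv₀
    (hv.trans (mul_le_mul_of_nonneg_left (le_max_right _ _) hs'))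

theorem abs_fAngle_some_sub_le {L : ℝ} (hs : s < 0) {p q : {p : ℝ × ℝ // 0 ≤ p.1 ∧ p.1 < p.2}}
    (hp : inBox L (some p)) (hq : inBox L (some q)) :
    |fAngle s (some p) - fAngle s (some q)|
      ≤ 2 * (L - s) / s ^ 2 * max |p.1.1 - q.1.1| |p.1.2 - q.1.2| := by
  obtain ⟨⟨a, b⟩, ha, hab⟩ := p
  obtain ⟨⟨c, d⟩, hc, hcd⟩ := q
  obtain ⟨⟨-, haL⟩, -, hbL⟩ := hp
  obtain ⟨⟨-, hcL⟩, -, hdL⟩ := hq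
  dsimp only at *
  set A := max |a - c| |b - d|
  have hA : 0 ≤ A := le_max_of_le_left (abs_nonneg _)
  have has : 0 < a - s := by linarith
  have hcs : 0 < c - s := by linarith
  have hdiff : (b - s) / (a - s) - (d - s) / (c - s)
      = ((c - s) * (b - d) + (d - s) * (c - a)) / ((a - s) * (c - s)) := by
    field_simp
    ring
  have hnum : |(c - s) * (b - d) + (d - s) * (c - a)| ≤ 2 * (L - s) * A :=
    calc |(c - s) * (b - d) + (d - s) * (c - a)|
        ≤ (c - s) * |b - d| + (d - s) * |c - a| := by
          grw [abs_add_le, abs_mul, abs_mul, abs_of_pos hcs, abs_of_pos (by linarith : 0 < d - s)]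
      _ ≤ (L - s) * A + (L - s) * A := by
          gcongr
          · linarith
          · exact le_max_right _ _
          · linarith
          · rw [abs_sub_comm]; exact le_max_left _ _
      _ = 2 * (L - s) * A := by ring
  have hs2 : 0 < s ^ 2 := by nlinarith
  have hden : s ^ 2 ≤ (a - s) * (c - s) := by nlinarith
  calc |arctan ((b - s) / (a - s)) - arctan ((d - s) / (c - s))|
      ≤ |(c - s) * (b - d) + (d - s) * (c - a)| / ((a - s) * (c - s)) := by
        rw [← abs_of_pos (mul_pos has hcs), ← abs_div, ← hdiff]
        exact abs_arctan_sub_arctan_le _ _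
    _ ≤ 2 * (L - s) * A / s ^ 2 := div_le_div₀ (mul_nonneg (by linarith) hA) hnum hs2 hden
    _ = 2 * (L - s) / s ^ 2 * A := by ring

theorem abs_fAngle_sub_le_dB {L : ℝ} (hL : 0 ≤ L) (hs : s < 0) {u v : D1}
    (hu : inBox L u) (hv : inBox L v) :
    |fAngle s u - fAngle s v| ≤ 2 * (L - s) / s ^ 2 * dB u v := by
  have hC : 2 / (-s) ≤ 2 * (L - s) / s ^ 2 := by
    rw [div_le_div_iff₀ (by linarith) (by nlinarith)]
    nlinarith
  have hC₀ : 0 ≤ 2 * (L - s) / s ^ 2 := (div_nonneg zero_le_two (by linarith)).trans hC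
  have hdiag : ∀ {d}, max (dB u none) (dB v none) ≤ d →
      |fAngle s u - fAngle s v| ≤ 2 * (L - s) / s ^ 2 * d := fun hd =>
    (abs_fAngle_sub_le_max_dB_none hs u v).trans
      (mul_le_mul hC hd (le_max_of_le_left (dB_nonneg_s19 _ _)) hC₀)
  rcases u with _ | p <;> rcases v with _ | q
  · simp [fAngle, dB]
  · exact hdiag (max_le (dB_nonneg_s19 _ _) le_rfl)
  · exact hdiag (max_le le_rfl (dB_nonneg_s19 _ _))
  · rw [dB, mul_min_of_nonneg _ _ hC₀]
    exact le_min (abs_fAngle_some_sub_le hs hu hv) (hdiag le_rfl)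

theorem eq_of_fAngle_eq_of_fAngle_eq {t : ℝ} (hs : s < 0) (ht : t < 0) (hst : s ≠ t) {u v : D1}
    (h₁ : fAngle s u = fAngle s v) (h₂ : fAngle t u = fAngle t v) : u = v := by
  rcases u with _ | ⟨⟨a, b⟩, ha, hab⟩ <;> rcases v with _ | ⟨⟨c, d⟩, hc, hcd⟩
  · rfl
  · exact absurd h₁ (pi_div_four_lt_fAngle_some hs _).ne
  · exact absurd h₁ (pi_div_four_lt_fAngle_some hs _).ne'
  · have cross : ∀ {w}, w < 0 →
        fAngle w (some ⟨(a, b), ha, hab⟩) = fAngle w (some ⟨(c, d), hc, hcd⟩) →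
        (b - w) * (c - w) = (d - w) * (a - w) := fun hw h =>
      (div_eq_div_iff (by linarith) (by linarith)).1 (arctan_injective h)
    have e₁ := cross hs h₁
    have e₂ := cross ht h₂
    have hsum : b + c = a + d := by
      have h : (t - s) * (b + c - (a + d)) = 0 := by linear_combination e₁ - e₂
      linarith [(mul_eq_zero.1 h).resolve_left (sub_ne_zero.2 hst.symm)]
    have h : (b - a) * (a - c) = 0 := by linear_combination (a - s) * hsum - e₁
    obtain rfl : a = c := by linarith [(mul_eq_zero.1 h).resolve_left (sub_ne_zero.2 hab.ne')]
    obtain rfl : b = d := by linarith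
    rfl

end Angle

theorem map_univ_sortedVals {N : ℕ} (s : ℝ) (x : Fin N → D1) :
    univ.val.map (sortedVals s x) = univ.val.map (fAngle s ∘ x) := by
  rw [sortedVals, ← Multiset.map_map, Multiset.map_univ_val_equiv]

theorem abs_sortedVals_sub_le {N : ℕ} {L s d : ℝ} (hL : 0 ≤ L) (hs : s < 0) {x y : Fin N → D1}
    (hx : ∀ j, inBox L (x j)) (hy : ∀ j, inBox L (y j)) (ψ : Equiv.Perm (Fin N))
    (hψ : ∀ j, dB (x j) (y (ψ j)) ≤ d) (j : Fin N) :
    |sortedVals s x j - sortedVals s y j| ≤ 2 * (L - s) / s ^ 2 * d :=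
  Tuple.abs_apply_sort_sub_apply_sort_le ψ (fun k =>
    (abs_fAngle_sub_le_dB hL hs (hx k) (hy (ψ k))).trans
      (mul_le_mul_of_nonneg_left (hψ k) (div_nonneg (by linarith) (sq_nonneg s)))) j

theorem exists_perm_forall_dB_lt_of_dBn_lt {N : ℕ} {x y : Fin N → D1} {δ : ℝ} (h : dBn x y < δ) :
    ∃ ψ : Equiv.Perm (Fin N), ∀ j, dB (x j) (y (ψ j)) < δ := by
  obtain ⟨ψ, -, hψ⟩ := (inf'_lt_iff _).1 h
  exact ⟨ψ, fun j => ((fold_max_lt _).1 hψ).2 j (mem_univ j)⟩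

/-- For pairwise distinct negative reals `s₁,…,s_{n+1}`, the map
`F = (F_{sᵢ})ᵢ : D_n ∩ [0,L]² → ℝ^{n(n+1)}` recording the sorted `f_{sᵢ}`-values
is injective and continuous. -/
theorem angle_map_injective_continuous {N : ℕ} (L : ℝ) (hL : 0 < L)
    (s : Fin (N + 1) → ℝ) (hs : Function.Injective s) (hneg : ∀ i, s i < 0) :
    (∀ x y : Fin N → D1, (∀ i, inBox L (x i)) → (∀ i, inBox L (y i)) →
      (∀ (i : Fin (N + 1)) (j : Fin N), sortedVals (s i) x j = sortedVals (s i) y j) →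
      ∃ ψ : Equiv.Perm (Fin N), x = y ∘ ψ) ∧
    (∀ x : Fin N → D1, (∀ i, inBox L (x i)) → ∀ ε > 0, ∃ δ > 0,
      ∀ y : Fin N → D1, (∀ i, inBox L (y i)) → dBn x y < δ →
      ∀ (i : Fin (N + 1)) (j : Fin N),
        |sortedVals (s i) x j - sortedVals (s i) y j| < ε) := by
  refine ⟨fun x y _ _ h => ?_, fun x hx ε hε => ?_⟩
  · refine Equiv.Perm.exists_eq_comp_of_map_univ_eq <|
      Multiset.eq_of_forall_map_eq_of_separating (f := fun i => fAngle (s i))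
        (fun i j hij _ _ => eq_of_fAngle_eq_of_fAngle_eq (hneg i) (hneg j) (hs.ne hij))
        (by simp) (by simp) fun i => ?_
    simp only [Multiset.map_map, ← map_univ_sortedVals, funext (h i)]
  · set C := ∑ i, 2 * (L - s i) / s i ^ 2
    have hC : ∀ i, 2 * (L - s i) / s i ^ 2 ≤ C := fun i =>
      single_le_sum (f := fun k => 2 * (L - s k) / s k ^ 2)
        (fun k _ => div_nonneg (by linarith [hneg k]) (sq_nonneg _)) (mem_univ i)
    have hC₀ : 0 ≤ C := (div_nonneg (by linarith [hneg 0]) (sq_nonneg _)).trans (hC 0)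
    refine ⟨ε / (C + 1), by positivity, fun y hy hxy i j => ?_⟩
    obtain ⟨ψ, hψ⟩ := exists_perm_forall_dB_lt_of_dBn_lt hxy
    calc |sortedVals (s i) x j - sortedVals (s i) y j|
        ≤ 2 * (L - s i) / s i ^ 2 * (ε / (C + 1)) :=
          abs_sortedVals_sub_le hL.le (hneg i) hx hy ψ (fun k => (hψ k).le) j
      _ ≤ C * (ε / (C + 1)) := by gcongr; exact hC i
      _ < ε := by rw [mul_div_assoc']; exact (div_lt_iff₀ (by positivity)).2 (by nlinarith)
end
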